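/- arXiv:1808.00162 — 3 statements merged into one kernel-verified Lean document; each statement's English description precedes it below -/
import Mathlib

section
/- Let a < b be real numbers and let (a_j)_{j∈ℕ} be a sequence of real numbers such that the set {a_j : j ∈ ℕ} is dense in the interval [a,b]. Then (a_j) is weakly-spaced. -/
open MeasureTheory Filter Topology
open scoped ENNReal InnerProductSpace

noncomputable section

/-- `∫ μ(B(x,ε))^{q-1} dμ(x)` (over `supp μ`, which is `μ`-a.e. all of `ℝ`), in `[0,∞]`. -/
def corrInt (μ : Measure ℝ) (q ε : ℝ) : ℝ≥0∞ :=
  ∫⁻ x, μ (Metric.ball x ε) ^ (q - 1) ∂μ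

/-- Upper `q`-generalized fractal dimension `D_μ^+(q)`. -/
def Dupper (μ : Measure ℝ) (q : ℝ) : ℝ :=
  limsup (fun ε : ℝ => Real.log (corrInt μ q ε).toReal / ((q - 1) * Real.log ε)) (𝓝[>] 0)

/-- Lower `q`-generalized fractal dimension `D_μ^-(q)`. -/
def Dlower (μ : Measure ℝ) (q : ℝ) : ℝ :=
  liminf (fun ε : ℝ => Real.log (corrInt μ q ε).toReal / ((q - 1) * Real.log ε)) (𝓝[>] 0)

/-- `∫_ℝ μ(B(x,ε))^q dx` (Lebesgue), in `[0,∞]`. -/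
def meanInt (μ : Measure ℝ) (q ε : ℝ) : ℝ≥0∞ :=
  ∫⁻ x, μ (Metric.ball x ε) ^ q

/-- Upper mean-`q` dimension `m_μ^+(q)`. -/
def mUpper (μ : Measure ℝ) (q : ℝ) : ℝ :=
  limsup (fun ε : ℝ => Real.log (ε⁻¹ * (meanInt μ q ε).toReal) / ((q - 1) * Real.log ε)) (𝓝[>] 0)

/-- Lower mean-`q` dimension `m_μ^-(q)`. -/
def mLower (μ : Measure ℝ) (q : ℝ) : ℝ :=
  liminf (fun ε : ℝ => Real.log (ε⁻¹ * (meanInt μ q ε).toReal) / ((q - 1) * Real.log ε)) (𝓝[>] 0)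

/-- `C_μ(q,t) = t ∫_{-r-1}^{r+1} (∫_ℝ e^{-t|x-y|} dμ(y))^q dx`. -/
def Cmu (μ : Measure ℝ) (r q t : ℝ) : ℝ :=
  t * ∫ x in Set.Icc (-r - 1) (r + 1), (∫ y, Real.exp (-(t * |x - y|)) ∂μ) ^ q

/-- A real sequence is weakly-spaced. -/
def WeaklySpaced (a : ℕ → ℝ) : Prop :=
  ∀ α : ℝ, 0 < α → ∃ j : ℕ → ℕ, Function.Injective j ∧
    (∀ l : ℕ, 0 < a (j l) - a (j (l + 1))) ∧
    Antitone (fun l : ℕ => a (j l) - a (j (l + 1))) ∧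
    Tendsto (fun l : ℕ => a (j l) - a (j (l + 1))) atTop (𝓝 0) ∧
    ∃ C : ℝ, 0 < C ∧ ∀ l : ℕ, C / ((l : ℝ) + 1) ^ (1 + α) ≤ a (j l) - a (j (l + 1))

variable {H : Type*} [NormedAddCommGroup H] [InnerProductSpace ℂ H] [CompleteSpace H]

/-- The spectral measure `μ_ξ = Σ_j |⟨e_j, ξ⟩|² δ_{λ_j}` of a vector `ξ` with respect to an
orthonormal basis of eigenvectors `e_j` with eigenvalues `lam j`. -/
def ppMeasure (e : HilbertBasis ℕ ℂ H) (lam : ℕ → ℝ) (ξ : H) : Measure ℝ :=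
  Measure.sum fun j => ((‖(⟪e j, ξ⟫_ℂ : ℂ)‖₊ : ℝ≥0∞) ^ 2) • Measure.dirac (lam j)

/-- `f(T)η = Σ_j f(λ_j)⟨e_j, η⟩ e_j` for the operator `T` diagonalized by `e` with
eigenvalues `lam`. -/
def applyF (e : HilbertBasis ℕ ℂ H) (lam : ℕ → ℝ) (f : ℝ → ℝ) (η : H) : H :=
  ∑' j : ℕ, (((f (lam j) : ℂ)) * ⟪e j, η⟫_ℂ) • e j

/-- `e^{-isT}η = Σ_j e^{-isλ_j}⟨e_j, η⟩ e_j`. -/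
def evolvePP (e : HilbertBasis ℕ ℂ H) (lam : ℕ → ℝ) (s : ℝ) (η : H) : H :=
  ∑' j : ℕ, (Complex.exp (-(Complex.I * s * lam j)) * ⟪e j, η⟫_ℂ) • e j

/-- Time-averaged `p`-moment `⟨⟨|X|^p⟩⟩_{t,η}` for the pure point operator diagonalized by `e`,
with respect to the orthonormal basis `B`, valued in `[0,∞]`. -/
def momentPP (e : HilbertBasis ℕ ℂ H) (lam : ℕ → ℝ) (B : HilbertBasis ℤ ℂ H) (p : ℝ)
    (η : H) (t : ℝ) : ℝ≥0∞ :=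
  ENNReal.ofReal t⁻¹ *
    ∫⁻ s in Set.Ioc (0 : ℝ) t,
      ∑' n : ℤ, ENNReal.ofReal (|(n : ℝ)| ^ p) *
        (‖(⟪evolvePP e lam s η, B n⟫_ℂ : ℂ)‖₊ : ℝ≥0∞) ^ 2

/-- Upper transport exponent `α_B^+(η,p)`, valued in `[-∞,∞]`. -/
def alphaPP (e : HilbertBasis ℕ ℂ H) (lam : ℕ → ℝ) (B : HilbertBasis ℤ ℂ H) (p : ℝ)
    (η : H) : EReal :=
  limsup (fun t : ℝ => ENNReal.log (momentPP e lam B p η t) / (Real.log t : EReal)) atTop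

/-- `e^{-isT}ξ` for a bounded operator `T`, via the operator exponential. -/
def evolveOp (T : H →L[ℂ] H) (s : ℝ) (ξ : H) : H :=
  (NormedSpace.exp ((-(Complex.I * s)) • T)) ξ

/-- Time-averaged `p`-moment `⟨⟨|X|^p⟩⟩_{t,ξ}` for a bounded operator `T`, with respect to the
orthonormal basis `B`, valued in `[0,∞]`. -/
def momentOp (T : H →L[ℂ] H) (B : HilbertBasis ℤ ℂ H) (p : ℝ) (ξ : H) (t : ℝ) : ℝ≥0∞ :=
  ENNReal.ofReal t⁻¹ *
    ∫⁻ s in Set.Ioc (0 : ℝ) t,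
      ∑' n : ℤ, ENNReal.ofReal (|(n : ℝ)| ^ p) *
        (‖(⟪evolveOp T s ξ, B n⟫_ℂ : ℂ)‖₊ : ℝ≥0∞) ^ 2

/-- Upper transport exponent `α_B^+(ξ,p)` for a bounded operator. -/
def alphaOp (T : H →L[ℂ] H) (B : HilbertBasis ℤ ℂ H) (p : ℝ) (ξ : H) : EReal :=
  limsup (fun t : ℝ => ENNReal.log (momentOp T B p ξ t) / (Real.log t : EReal)) atTop

open Classical in
/-- Pointwise upper scaling exponent `d_μ^+(x)`, valued in `[-∞,∞]` (with value `⊤` when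
`μ(B(x,ε)) = 0` for some `ε > 0`). -/
def dUpperPt (μ : Measure ℝ) (x : ℝ) : EReal :=
  if ∀ ε : ℝ, 0 < ε → 0 < μ (Metric.ball x ε) then
    limsup (fun ε : ℝ => ((Real.log (μ (Metric.ball x ε)).toReal / Real.log ε : ℝ) : EReal))
      (𝓝[>] 0)
  else ⊤

/-- Upper packing dimension `dim_P^+(μ) = μ-esssup d_μ^+`. -/
def packDimUpper (μ : Measure ℝ) : EReal := essSup (dUpperPt μ) μ

end

theorem stmt_1 (a b : ℝ) (hab : a < b) (f : ℕ → ℝ)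
    (hmem : ∀ j, f j ∈ Set.Icc a b)
    (hdense : Set.Icc a b ⊆ closure (Set.range f)) :
    WeaklySpaced f := by
  intro α hα
  set m : ℝ := min α 1 with hmdef
  have hm0 : 0 < m := lt_min hα one_pos
  have hm1 : m ≤ 1 := min_le_right _ _
  have hmα : m ≤ α := min_le_left _ _
  set β : ℝ := 1 + m with hβdef
  have hβ1 : 1 < β := by simp only [hβdef]; linarith
  have hβ2 : β ≤ 2 := by simp only [hβdef]; linarith
  have hβα : β ≤ 1 + α := by simp only [hβdef]; linarith
  have hbase : ∀ l : ℕ, (1:ℝ) ≤ (l:ℝ) + 1 := fun l => by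
    have := Nat.cast_nonneg (α := ℝ) l; linarith
  set g : ℕ → ℝ := fun n => ((n:ℝ) + 1) ^ (-β) with hgdef
  have hgpos : ∀ n, 0 < g n := fun n => Real.rpow_pos_of_pos (by linarith [hbase n]) _
  have hganti : ∀ k l : ℕ, k ≤ l → g l ≤ g k := by
    intro k l hkl
    have h1 : ((k:ℝ) + 1) ^ β ≤ ((l:ℝ) + 1) ^ β := by
      apply Real.rpow_le_rpow (by linarith [hbase k]) _ (by linarith)
      have : (k:ℝ) ≤ (l:ℝ) := Nat.cast_le.2 hkl
      linarith
    have h2 : (((l:ℝ) + 1) ^ β)⁻¹ ≤ (((k:ℝ) + 1) ^ β)⁻¹ :=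
      inv_anti₀ (Real.rpow_pos_of_pos (by linarith [hbase k]) _) h1
    simp only [hgdef]
    rw [Real.rpow_neg (by linarith [hbase l]), Real.rpow_neg (by linarith [hbase k])]
    exact h2
  clear_value g
  have hgsum : Summable g := by
    have h0 := (Real.summable_nat_rpow (p := -β)).2 (by linarith)
    have h2 := (summable_nat_add_iff (f := fun n : ℕ => (n:ℝ) ^ (-β)) 1).2 h0
    refine h2.congr fun n => ?_
    simp only [hgdef]; push_cast; ring_nf
  set T : ℕ → ℝ := fun l => ∑' i : ℕ, g (i + l) with hTdef
  have hTsum : ∀ l, Summable (fun i => g (i + l)) := fun l =>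
    (summable_nat_add_iff l).2 hgsum
  have hTnonneg : ∀ l, 0 ≤ T l := fun l => tsum_nonneg fun i => (hgpos _).le
  have hTrec : ∀ l, T l = g l + T (l + 1) := by
    intro l
    calc T l = g (0 + l) + ∑' i : ℕ, g (i + 1 + l) := Summable.tsum_eq_zero_add (hTsum l)
      _ = g l + T (l + 1) := by
          congr 1
          · congr 1; omega
          · exact tsum_congr fun i => by congr 1; omega
  have hTle : ∀ l, T l ≤ T 0 := by
    intro l
    refine Summable.tsum_le_tsum (fun i => hganti i (i + l) (by omega)) (hTsum l) ?_
    simpa using hTsum 0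
  clear_value T
  set S : ℝ := T 0 with hSdef
  have hS : 0 ≤ S := hTnonneg 0
  set K : ℝ := (b - a) / (2 * (S + 1)) with hKdef
  clear_value S
  have hK : 0 < K := div_pos (by linarith) (by linarith)
  have hKS : K * (S + 1) = (b - a) / 2 := by
    rw [hKdef]; field_simp
  clear_value K
  set δ : ℕ → ℝ := fun l => K / 8 ^ (l + 1) with hδdef
  have hδpos : ∀ l, 0 < δ l := fun l => div_pos hK (by positivity)
  have hδrec : ∀ l, δ (l + 1) = δ l / 8 := by
    intro l; simp only [hδdef]; rw [pow_succ]; ring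
  have hδleK : ∀ l, δ l ≤ K := fun l =>
    div_le_self hK.le (one_le_pow₀ (by norm_num))
  clear_value δ
  set t : ℕ → ℝ := fun l => a + K * T l with htdef
  have htrec : ∀ l, t l = t (l + 1) + K * g l := by
    intro l; simp only [htdef]; rw [hTrec l]; ring
  clear_value t
  -- δ (l+1) ≤ K * g l
  have hδled : ∀ l, δ (l + 1) ≤ K * g l := by
    intro l
    have hnat : (l + 1) ^ 2 ≤ 8 ^ (l + 2) := by
      calc (l + 1) ^ 2 ≤ (2 ^ (l + 1)) ^ 2 :=
            Nat.pow_le_pow_left (Nat.le_of_lt (Nat.lt_two_pow_self)) 2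
        _ = (2 ^ 2) ^ (l + 1) := pow_right_comm 2 (l + 1) 2
        _ ≤ 8 ^ (l + 1) := Nat.pow_le_pow_left (by norm_num) _
        _ ≤ 8 ^ (l + 2) := Nat.pow_le_pow_right (by norm_num) (by omega)
    have h3 : ((l:ℝ) + 1) ^ (2:ℕ) ≤ (8:ℝ) ^ (l + 2) := by
      have := (Nat.cast_le (α := ℝ)).2 hnat
      push_cast at this
      convert this using 2 <;> norm_num
    have h1 : ((l:ℝ) + 1) ^ β ≤ ((l:ℝ) + 1) ^ (2:ℝ) :=
      Real.rpow_le_rpow_of_exponent_le (hbase l) hβ2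
    have h2 : ((l:ℝ) + 1) ^ (2:ℝ) = ((l:ℝ) + 1) ^ (2:ℕ) := by
      rw [show ((2:ℝ)) = ((2:ℕ):ℝ) by norm_num, Real.rpow_natCast]
    have h4 : ((l:ℝ) + 1) ^ β ≤ (8:ℝ) ^ (l + 2) := by
      rw [h2] at h1; linarith
    have h5 : ((8:ℝ) ^ (l + 2))⁻¹ ≤ (((l:ℝ) + 1) ^ β)⁻¹ :=
      inv_anti₀ (Real.rpow_pos_of_pos (by linarith [hbase l]) _) h4
    have h6 : g l = (((l:ℝ) + 1) ^ β)⁻¹ := by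
      simp only [hgdef]; rw [Real.rpow_neg (by linarith [hbase l])]
    calc δ (l + 1) = K * ((8:ℝ) ^ (l + 2))⁻¹ := by
          simp only [hδdef]; rw [div_eq_mul_inv]
      _ ≤ K * (((l:ℝ) + 1) ^ β)⁻¹ := by
          exact mul_le_mul_of_nonneg_left h5 hK.le
      _ = K * g l := by rw [h6]
  -- choose points
  have hchoice : ∀ l, ∃ jj : ℕ, t l + δ l / 2 < f jj ∧ f jj < t l + δ l := by
    intro l
    have hxa : a ≤ t l + δ l * 3 / 4 := by
      have h1 : 0 ≤ K * T l := mul_nonneg hK.le (hTnonneg l)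
      have := hδpos l
      simp only [htdef]; linarith
    have htlδ : t l + δ l ≤ b := by
      have h1 : K * T l ≤ K * S := mul_le_mul_of_nonneg_left (hTle l) hK.le
      have h2 : δ l ≤ K := hδleK l
      simp only [htdef]
      nlinarith [hKS, hS]
    have hxb : t l + δ l * 3 / 4 ≤ b := by
      have := hδpos l; linarith
    have hx : t l + δ l * 3 / 4 ∈ closure (Set.range f) := hdense ⟨hxa, hxb⟩
    obtain ⟨y, hy1, hy2⟩ := mem_closure_iff.1 hx
      (Set.Ioo (t l + δ l / 2) (t l + δ l)) isOpen_Ioo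
      ⟨by have := hδpos l; linarith, by have := hδpos l; linarith⟩
    obtain ⟨jj, hjj⟩ := hy2
    exact ⟨jj, by rw [hjj]; exact hy1.1, by rw [hjj]; exact hy1.2⟩
  choose j hj1 hj2 using hchoice
  -- positivity and lower bound
  have hclb : ∀ l, K * g l ≤ f (j l) - f (j (l + 1)) := by
    intro l
    have h1 := hj1 l
    have h2 := hj2 (l + 1)
    have h3 := htrec l
    have h4 := hδrec l
    have h5 := (hδpos l).le
    linarith
  have hcpos : ∀ l, 0 < f (j l) - f (j (l + 1)) := fun l =>
    lt_of_lt_of_le (mul_pos hK (hgpos l)) (hclb l)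
  -- antitone
  have hanti : ∀ l, f (j (l + 1)) - f (j (l + 2)) ≤ f (j l) - f (j (l + 1)) := by
    intro l
    have h1 := hj1 l
    have h2 := hj2 (l + 1)
    have h3 := hj1 (l + 2)
    have h4 := hj2 (l + 2)
    have hr1 := htrec l
    have hr2 : t (l + 1) = t (l + 2) + K * g (l + 1) := htrec (l + 1)
    have hd1 := hδrec l
    have hd2 : δ (l + 2) = δ (l + 1) / 8 := hδrec (l + 1)
    have hgm : K * g (l + 1) ≤ K * g l :=
      mul_le_mul_of_nonneg_left (hganti l (l + 1) (by omega)) hK.le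
    have h5 := (hδpos l).le
    linarith
  -- upper bound for squeeze
  have hub : ∀ l, f (j l) - f (j (l + 1)) ≤ K * (1 / ((l:ℝ) + 1)) + K * (1 / ((l:ℝ) + 1)) := by
    intro l
    have h1 := hj2 l
    have h2 := hj1 (l + 1)
    have hr1 := htrec l
    have hg1 : g l ≤ ((l:ℝ) + 1)⁻¹ := by
      have := Real.rpow_le_rpow_of_exponent_le (hbase l) (show -β ≤ -1 by linarith)
      rw [Real.rpow_neg_one] at this
      rw [hgdef]; exact this
    have hKg : K * g l ≤ K * (1 / ((l:ℝ) + 1)) := by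
      rw [one_div]; exact mul_le_mul_of_nonneg_left hg1 hK.le
    have hδl : δ l ≤ K * (1 / ((l:ℝ) + 1)) := by
      have hnat : (l + 1 : ℕ) ≤ 8 ^ (l + 1) := by
        calc (l + 1 : ℕ) ≤ 2 ^ (l + 1) := Nat.le_of_lt (Nat.lt_two_pow_self)
          _ ≤ 8 ^ (l + 1) := Nat.pow_le_pow_left (by norm_num) _
      have hcast : ((l:ℝ) + 1) ≤ (8:ℝ) ^ (l + 1) := by
        have := (Nat.cast_le (α := ℝ)).2 hnat
        push_cast at this
        convert this using 1 <;> norm_num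
      have := div_le_div_of_nonneg_left hK.le (show (0:ℝ) < (l:ℝ) + 1 by linarith [hbase l]) hcast
      simp only [hδdef]
      rw [mul_one_div]
      exact this
    have h6 := (hδpos (l + 1)).le
    linarith
  have htend : Tendsto (fun l : ℕ => f (j l) - f (j (l + 1))) atTop (𝓝 0) := by
    refine squeeze_zero (fun l => (hcpos l).le) hub ?_
    have h := tendsto_one_div_add_atTop_nhds_zero_nat (𝕜 := ℝ)
    simpa using (h.const_mul K).add (h.const_mul K)
  -- injectivity
  have hsa : StrictAnti (fun l => f (j l)) :=
    strictAnti_nat_of_succ_lt fun l => by have := hcpos l; linarith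
  have hinj : Function.Injective j := by
    intro x y hxy
    exact hsa.injective (show f (j x) = f (j y) by rw [hxy])
  refine ⟨j, hinj, hcpos, antitone_nat_of_succ_le hanti, htend, K, hK, ?_⟩
  intro l
  have h1 : ((l:ℝ) + 1) ^ (-(1 + α)) ≤ ((l:ℝ) + 1) ^ (-β) :=
    Real.rpow_le_rpow_of_exponent_le (hbase l) (by linarith)
  have h2 : K / ((l:ℝ) + 1) ^ (1 + α) = K * ((l:ℝ) + 1) ^ (-(1 + α)) := by
    rw [Real.rpow_neg (by linarith [hbase l]), div_eq_mul_inv]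
  calc K / ((l:ℝ) + 1) ^ (1 + α) = K * ((l:ℝ) + 1) ^ (-(1 + α)) := h2
    _ ≤ K * g l := by rw [hgdef]; exact mul_le_mul_of_nonneg_left h1 hK.le
    _ ≤ f (j l) - f (j (l + 1)) := hclb l
end

section
/- Let T be a bounded self-adjoint operator on a complex Hilbert space H, let q ∈ (0,1) and γ ≥ 0. Then the set {ξ ∈ H : ξ ≠ 0 and D_{μ_ξ^T}^+(q) ≥ γ} is a G_δ subset of H. -/
open MeasureTheory Filter Topology
open scoped ENNReal InnerProductSpace

open Metric Set

noncomputable section SGAux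

/-- antitone base for nonpositive exponents, `ℝ≥0∞` version. -/
lemma SG.ennreal_rpow_anti {a b : ℝ≥0∞} (hab : a ≤ b) {c : ℝ} (hc : c ≤ 0) :
    b ^ c ≤ a ^ c := by
  have h : c = -(-c) := by ring
  rw [h, ENNReal.rpow_neg b, ENNReal.rpow_neg a]
  exact ENNReal.inv_le_inv.mpr (ENNReal.rpow_le_rpow hab (by linarith))

lemma SG.meas_ball_meas (ν : Measure ℝ) (r : ℝ) :
    Measurable fun x : ℝ => ν (ball x r) := by
  refine LowerSemicontinuous.measurable ?_
  intro x c hc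
  have hU : ball x r = ⋃ n : ℕ, ball x (r - 1 / ((n : ℝ) + 1)) := by
    ext y
    simp only [mem_ball, mem_iUnion]
    constructor
    · intro hy
      obtain ⟨n, hn⟩ := exists_nat_one_div_lt (show (0:ℝ) < r - dist y x by linarith)
      exact ⟨n, by linarith⟩
    · rintro ⟨n, hn⟩
      have h1 : 0 < 1 / ((n:ℝ) + 1) := by positivity
      linarith
  have hmono : Monotone fun n : ℕ => ball x (r - 1 / ((n : ℝ) + 1)) := by
    intro n m hnm
    apply ball_subset_ball
    have h1 : (1:ℝ) / ((m:ℝ)+1) ≤ 1 / ((n:ℝ)+1) := by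
      apply one_div_le_one_div_of_le (by positivity)
      have : (n:ℝ) ≤ m := by exact_mod_cast hnm
      linarith
    linarith
  change c < ν (ball x r) at hc
  rw [hU, (hmono.directed_le).measure_iUnion] at hc
  rw [lt_iSup_iff] at hc
  obtain ⟨n, hn⟩ := hc
  have hpos : 0 < 1 / ((n:ℝ)+1) := by positivity
  filter_upwards [ball_mem_nhds x hpos] with y hy
  refine lt_of_lt_of_le hn (measure_mono ?_)
  intro z hz
  rw [mem_ball] at hz hy ⊢
  have := dist_triangle z x y
  have hxy : dist x y = dist y x := dist_comm x y
  linarith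

lemma SG.corrInt_le (ν : Measure ℝ) [IsFiniteMeasure ν] {R ε q : ℝ} (hε : 0 < ε)
    (hsupp : ν ((Icc (-R) R)ᶜ) = 0) (hq0 : 0 < q) (hq1 : q < 1) :
    corrInt ν q ε ≤ (2 * ((⌈R / ε⌉₊ : ℕ) : ℝ≥0∞) + 2) * max 1 (ν univ) := by
  set N : ℕ := ⌈R / ε⌉₊ with hN
  set I : ℤ → Set ℝ := fun k => Ico ((k:ℝ) * ε) (((k:ℝ) + 1) * ε) with hI
  have hmeas : ∀ k, MeasurableSet (I k) := fun k => measurableSet_Ico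
  have hdisj : Pairwise (Function.onFun Disjoint I) := by
    intro k l hkl
    simp only [hI, Function.onFun]
    rw [Set.Ico_disjoint_Ico]
    rcases hkl.lt_or_gt with h | h
    · have hz : k + 1 ≤ l := by omega
      have hkl' : (k:ℝ) + 1 ≤ (l:ℝ) := by exact_mod_cast hz
      refine le_trans (min_le_left _ _) (le_trans ?_ (le_max_right _ _))
      nlinarith
    · have hz : l + 1 ≤ k := by omega
      have hkl' : (l:ℝ) + 1 ≤ (k:ℝ) := by exact_mod_cast hz
      refine le_trans (min_le_right _ _) (le_trans ?_ (le_max_left _ _))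
      nlinarith
  have hcover : (univ : Set ℝ) = ⋃ k : ℤ, I k := by
    ext y
    simp only [mem_univ, true_iff, mem_iUnion, hI, mem_Ico]
    refine ⟨⌊y / ε⌋, ?_, ?_⟩
    · have h1 := Int.floor_le (y / ε)
      have h2 : (⌊y/ε⌋ : ℝ) * ε ≤ (y/ε) * ε := by nlinarith
      have h3 : (y/ε) * ε = y := by field_simp
      linarith
    · have h1 := Int.lt_floor_add_one (y / ε)
      have h3 : (y/ε) * ε = y := by field_simp
      nlinarith
  have key : ∀ k : ℤ, ∫⁻ x in I k, ν (ball x ε) ^ (q-1) ∂ν ≤ ν (I k) ^ q := by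
    intro k
    have hsub : ∀ x ∈ I k, I k ⊆ ball x ε := by
      intro x hx y hy
      simp only [hI, mem_Ico] at hx hy
      rw [mem_ball, Real.dist_eq, abs_lt]
      constructor <;> [nlinarith [hx.1, hx.2, hy.1, hy.2]; nlinarith [hx.1, hx.2, hy.1, hy.2]]
    have step1 : ∫⁻ x in I k, ν (ball x ε) ^ (q-1) ∂ν ≤ ∫⁻ _x in I k, ν (I k) ^ (q-1) ∂ν := by
      refine setLIntegral_mono measurable_const ?_
      intro x hx
      exact SG.ennreal_rpow_anti (measure_mono (hsub x hx)) (by linarith)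
    rw [setLIntegral_const] at step1
    refine le_trans step1 ?_
    rcases eq_or_ne (ν (I k)) 0 with h0 | h0
    · rw [h0, mul_zero]; exact zero_le
    · have : ν (I k) ^ (q-1) * ν (I k) = ν (I k) ^ q := by
        nth_rewrite 2 [← ENNReal.rpow_one (ν (I k))]
        rw [← ENNReal.rpow_add _ _ h0 (measure_ne_top ν _)]
        norm_num
      rw [this]
  have hNε : R ≤ (N:ℝ) * ε := by
    have h1 := Nat.le_ceil (R / ε)
    have h2 : (R/ε) * ε = R := by field_simp
    nlinarith
  have hzero : ∀ k : ℤ, k ∉ Finset.Icc (-(N:ℤ)-1) (N:ℤ) → ν (I k) = 0 := by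
    intro k hk
    simp only [Finset.mem_Icc, not_and_or, not_le] at hk
    refine measure_mono_null ?_ hsupp
    intro y hy
    simp only [hI, mem_Ico] at hy
    simp only [mem_compl_iff, mem_Icc, not_and_or, not_le]
    rcases hk with h | h
    · left
      have hz : k + 1 ≤ -(N:ℤ) - 1 := by omega
      have hk2 : (k:ℝ) + 1 ≤ -(N:ℝ) - 1 := by exact_mod_cast hz
      nlinarith [hy.2]
    · right
      have hz : (N:ℤ) + 1 ≤ k := by omega
      have hk2 : (N:ℝ) + 1 ≤ (k:ℝ) := by exact_mod_cast hz
      nlinarith [hy.1]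
  have hbound : ∀ k : ℤ, ν (I k) ^ q ≤ max 1 (ν univ) := by
    intro k
    rcases le_total (ν (I k)) 1 with h | h
    · exact le_trans (ENNReal.rpow_le_one h hq0.le) (le_max_left _ _)
    · calc ν (I k) ^ q ≤ ν (I k) ^ (1:ℝ) := ENNReal.rpow_le_rpow_of_exponent_le h (by linarith)
        _ = ν (I k) := ENNReal.rpow_one _
        _ ≤ ν univ := measure_mono (subset_univ _)
        _ ≤ max 1 (ν univ) := le_max_right _ _
  have hcard : (Finset.Icc (-(N:ℤ)-1) (N:ℤ)).card = 2*N + 2 := by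
    rw [Int.card_Icc]
    omega
  calc corrInt ν q ε = ∫⁻ x in ⋃ k : ℤ, I k, ν (ball x ε) ^ (q-1) ∂ν := by
        rw [← hcover, setLIntegral_univ]; rfl
    _ = ∑' k : ℤ, ∫⁻ x in I k, ν (ball x ε) ^ (q-1) ∂ν := lintegral_iUnion hmeas hdisj _
    _ ≤ ∑' k : ℤ, ν (I k) ^ q := ENNReal.tsum_le_tsum key
    _ = ∑ k ∈ Finset.Icc (-(N:ℤ)-1) (N:ℤ), ν (I k) ^ q := by
        refine tsum_eq_sum ?_
        intro k hk
        rw [hzero k hk]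
        exact ENNReal.zero_rpow_of_pos hq0
    _ ≤ (Finset.Icc (-(N:ℤ)-1) (N:ℤ)).card • max 1 (ν univ) :=
        Finset.sum_le_card_nsmul _ _ _ (fun k _ => hbound k)
    _ = (2 * ((N:ℕ) : ℝ≥0∞) + 2) * max 1 (ν univ) := by
        rw [hcard, nsmul_eq_mul]
        push_cast
        ring

lemma SG.corrInt_ne_top (ν : Measure ℝ) [IsFiniteMeasure ν] {R ε q : ℝ} (hε : 0 < ε)
    (hsupp : ν ((Icc (-R) R)ᶜ) = 0) (hq0 : 0 < q) (hq1 : q < 1) :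
    corrInt ν q ε ≠ ⊤ := by
  refine ne_top_of_le_ne_top ?_ (SG.corrInt_le ν hε hsupp hq0 hq1)
  apply ENNReal.mul_ne_top
  · apply ENNReal.add_ne_top.mpr
    constructor
    · exact ENNReal.mul_ne_top (by simp) (ENNReal.natCast_ne_top _)
    · simp
  · exact (max_lt ENNReal.one_lt_top (measure_lt_top ν _)).ne

lemma SG.le_corrInt (ν : Measure ℝ) [IsFiniteMeasure ν] {q : ℝ} (ε : ℝ) (hq0 : 0 < q) (hq1 : q < 1) :
    ν univ ^ q ≤ corrInt ν q ε := by
  rcases eq_or_ne (ν univ) 0 with h0 | h0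
  · rw [h0, ENNReal.zero_rpow_of_pos hq0]; exact zero_le
  · have heq : ν univ ^ (q-1) * ν univ = ν univ ^ q := by
      nth_rewrite 2 [← ENNReal.rpow_one (ν univ)]
      rw [← ENNReal.rpow_add _ _ h0 (measure_ne_top ν _)]
      norm_num
    calc ν univ ^ q = ν univ ^ (q-1) * ν univ := heq.symm
      _ = ∫⁻ _x, ν univ ^ (q-1) ∂ν := by rw [lintegral_const]
      _ ≤ corrInt ν q ε := lintegral_mono fun x =>
          SG.ennreal_rpow_anti (measure_mono (subset_univ _)) (by linarith)


def SGchi (ε δ x y : ℝ) : ℝ := max 0 (min 1 ((ε + δ - |x - y|) / δ))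

lemma SGchi_nonneg {ε δ x y : ℝ} : 0 ≤ SGchi ε δ x y := le_max_left _ _

lemma SGchi_le_one {ε δ x y : ℝ} : SGchi ε δ x y ≤ 1 :=
  max_le (by norm_num) (min_le_left _ _)

lemma SGchi_eq_one {ε δ x y : ℝ} (hδ : 0 < δ) (h : |x - y| ≤ ε) : SGchi ε δ x y = 1 := by
  unfold SGchi
  have h1 : (1:ℝ) ≤ (ε + δ - |x - y|) / δ := by rw [le_div_iff₀ hδ]; linarith
  rw [min_eq_left h1]
  exact max_eq_right (by norm_num)

lemma SGchi_eq_zero {ε δ x y : ℝ} (hδ : 0 < δ) (h : ε + δ ≤ |x - y|) : SGchi ε δ x y = 0 := by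
  unfold SGchi
  have h1 : (ε + δ - |x - y|) / δ ≤ 0 := div_nonpos_of_nonpos_of_nonneg (by linarith) hδ.le
  apply max_eq_left
  exact le_trans (min_le_right _ _) h1

lemma SGchi_cont_y {ε δ : ℝ} (x : ℝ) : Continuous fun y => SGchi ε δ x y := by
  unfold SGchi
  exact continuous_const.max (continuous_const.min
    ((continuous_const.sub (continuous_const.sub continuous_id).abs).div_const δ))

lemma SGchi_cont_x {ε δ : ℝ} (y : ℝ) : Continuous fun x => SGchi ε δ x y := by
  unfold SGchi
  exact continuous_const.max (continuous_const.min
    ((continuous_const.sub (continuous_id.sub continuous_const).abs).div_const δ))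

def SGphi (q c t : ℝ) : ℝ := Real.exp ((q - 1) * Real.log (max t c))

lemma SGphi_pos {q c t : ℝ} : 0 < SGphi q c t := Real.exp_pos _

lemma SGphi_anti {q c : ℝ} (hc : 0 < c) (hq : q ≤ 1) {t s : ℝ} (h : t ≤ s) :
    SGphi q c s ≤ SGphi q c t := by
  unfold SGphi
  apply Real.exp_le_exp.mpr
  apply mul_le_mul_of_nonpos_left ?_ (by linarith)
  exact Real.log_le_log (lt_of_lt_of_le hc (le_max_right _ _)) (max_le_max h le_rfl)

lemma SGphi_eq_rpow {q c : ℝ} (hc : 0 < c) (t : ℝ) : SGphi q c t = (max t c) ^ (q-1) := by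
  unfold SGphi
  rw [Real.rpow_def_of_pos (lt_of_lt_of_le hc (le_max_right _ _)), mul_comm]

lemma SGphi_le {q c : ℝ} (hc : 0 < c) (hq : q ≤ 1) (t : ℝ) : SGphi q c t ≤ c ^ (q-1) := by
  rw [SGphi_eq_rpow hc]
  exact Real.rpow_le_rpow_of_nonpos hc (le_max_right _ _) (by linarith)

lemma SGphi_cont {q c : ℝ} (hc : 0 < c) : Continuous fun t => SGphi q c t := by
  unfold SGphi
  refine Real.continuous_exp.comp (continuous_const.mul ?_)
  exact (continuous_id.max continuous_const).log
    (fun t => (lt_of_lt_of_le hc (le_max_right t c)).ne')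

lemma SGphi_lip {q c : ℝ} (hc : 0 < c) (hq : q < 1) (a b : ℝ) :
    |SGphi q c a - SGphi q c b| ≤ (1 - q) * c ^ (q-1) / c * |a - b| := by
  have key : ∀ s t : ℝ, s ≤ t →
      SGphi q c s - SGphi q c t ≤ (1-q) * c^(q-1) / c * (t - s) := by
    intro s t hst
    set A := max s c with hA'
    set B := max t c with hB'
    have hA : 0 < A := lt_of_lt_of_le hc (le_max_right _ _)
    have hB : 0 < B := lt_of_lt_of_le hc (le_max_right _ _)
    have hAB : A ≤ B := max_le_max hst le_rfl
    have hcA : c ≤ A := le_max_right _ _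
    have hBA : B - A ≤ t - s := by
      have h1 : s ≤ A := le_max_left _ _
      have h3 : B ≤ t - s + A := max_le (by linarith) (by linarith)
      linarith
    set u := (q-1) * Real.log A with hu'
    set v := (q-1) * Real.log B with hv'
    have hlog : Real.log A ≤ Real.log B := Real.log_le_log hA hAB
    have huv : v ≤ u := mul_le_mul_of_nonpos_left hlog (by linarith)
    have h3 : Real.exp u - Real.exp v ≤ Real.exp u * (u - v) := by
      have h4 := Real.add_one_le_exp (v - u)
      have h5 : Real.exp u * ((v - u) + 1) ≤ Real.exp u * Real.exp (v - u) :=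
        mul_le_mul_of_nonneg_left h4 (Real.exp_pos u).le
      rw [← Real.exp_add] at h5
      have h6 : u + (v - u) = v := by ring
      rw [h6] at h5
      nlinarith [Real.exp_pos u]
    have hexpu : Real.exp u ≤ c ^ (q-1) := by
      have h7 : Real.log c ≤ Real.log A := Real.log_le_log hc hcA
      have h8 : u ≤ (q-1) * Real.log c := mul_le_mul_of_nonpos_left h7 (by linarith)
      calc Real.exp u ≤ Real.exp ((q-1) * Real.log c) := Real.exp_le_exp.mpr h8
        _ = c ^ (q-1) := by rw [Real.rpow_def_of_pos hc, mul_comm]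
    have huv2 : u - v ≤ (1-q) * ((t - s) / c) := by
      have h9 : Real.log B - Real.log A = Real.log (B / A) := (Real.log_div hB.ne' hA.ne').symm
      have h10 : Real.log (B / A) ≤ B / A - 1 := Real.log_le_sub_one_of_pos (div_pos hB hA)
      have h11 : B / A - 1 = (B - A) / A := by field_simp
      have h12 : (B - A) / A ≤ (B - A) / c :=
        div_le_div_of_nonneg_left (by linarith) hc hcA
      have h13 : (B - A) / c ≤ (t - s) / c := (div_le_div_iff_of_pos_right hc).mpr hBA
      have h14 : Real.log B - Real.log A ≤ (t - s)/c := by rw [h9]; linarith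
      have h15 : u - v = (1-q) * (Real.log B - Real.log A) := by rw [hu', hv']; ring
      rw [h15]
      exact mul_le_mul_of_nonneg_left h14 (by linarith)
    have hfin : Real.exp u * (u - v) ≤ c^(q-1) * ((1-q) * ((t-s)/c)) :=
      mul_le_mul hexpu huv2 (by linarith) (Real.rpow_nonneg hc.le _)
    calc SGphi q c s - SGphi q c t = Real.exp u - Real.exp v := rfl
      _ ≤ Real.exp u * (u - v) := h3
      _ ≤ c^(q-1) * ((1-q) * ((t-s)/c)) := hfin
      _ = (1-q) * c^(q-1)/c * (t - s) := by ring
  have hK : 0 ≤ (1-q) * c^(q-1) / c :=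
    div_nonneg (mul_nonneg (by linarith) (Real.rpow_nonneg hc.le _)) hc.le
  rcases le_total a b with h | h
  · rw [abs_of_nonneg (sub_nonneg.mpr (SGphi_anti hc hq.le h)), abs_sub_comm,
      abs_of_nonneg (sub_nonneg.mpr h)]
    exact key a b h
  · rw [abs_of_nonpos (sub_nonpos.mpr (SGphi_anti hc hq.le h)),
      abs_of_nonneg (sub_nonneg.mpr h), neg_sub]
    exact key b a h


def SGrho (ν : Measure ℝ) (ε δ x : ℝ) : ℝ := ∫ y, SGchi ε δ x y ∂ν

def SGG (ν : Measure ℝ) (q c ε δ : ℝ) : ℝ := ∫ x, SGphi q c (SGrho ν ε δ x) ∂ν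

lemma SG.integrable_bdd_cont (ν : Measure ℝ) [IsFiniteMeasure ν] {f : ℝ → ℝ}
    (hf : Continuous f) (C : ℝ) (hC : ∀ x, |f x| ≤ C) : Integrable f ν :=
  (integrable_const C).mono' hf.aestronglyMeasurable
    (Eventually.of_forall (by simpa [Real.norm_eq_abs] using hC))

lemma SG.chi_integrable (ν : Measure ℝ) [IsFiniteMeasure ν] {ε δ : ℝ} (x : ℝ) :
    Integrable (fun y => SGchi ε δ x y) ν :=
  SG.integrable_bdd_cont ν (SGchi_cont_y x) 1
    (fun y => abs_le.mpr ⟨by linarith [SGchi_nonneg (ε := ε) (δ := δ) (x := x) (y := y)],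
      SGchi_le_one⟩)

lemma SGrho_nonneg (ν : Measure ℝ) {ε δ x : ℝ} : 0 ≤ SGrho ν ε δ x :=
  integral_nonneg fun y => SGchi_nonneg

lemma SGrho_ge (ν : Measure ℝ) [IsFiniteMeasure ν] {ε δ : ℝ} (hδ : 0 < δ) (x : ℝ) :
    (ν (ball x ε)).toReal ≤ SGrho ν ε δ x := by
  rw [← measureReal_def, ← integral_indicator_one measurableSet_ball]
  apply integral_mono ((integrable_const (1:ℝ)).indicator measurableSet_ball)
    (SG.chi_integrable ν x)
  intro y
  by_cases hy : y ∈ ball x ε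
  · rw [Set.indicator_of_mem hy]
    show (1:ℝ) ≤ SGchi ε δ x y
    rw [mem_ball, Real.dist_eq] at hy
    rw [SGchi_eq_one hδ (by rw [abs_sub_comm]; exact hy.le)]
  · rw [Set.indicator_of_notMem hy]
    show (0:ℝ) ≤ SGchi ε δ x y
    exact SGchi_nonneg

lemma SGrho_le (ν : Measure ℝ) [IsFiniteMeasure ν] {ε δ : ℝ} (hδ : 0 < δ) (x : ℝ) :
    SGrho ν ε δ x ≤ (ν (ball x (ε + 2*δ))).toReal := by
  rw [← measureReal_def, ← integral_indicator_one (measurableSet_ball (x := x) (ε := ε + 2*δ))]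
  apply integral_mono (SG.chi_integrable ν x)
    ((integrable_const (1:ℝ)).indicator measurableSet_ball)
  intro y
  by_cases hy : y ∈ ball x (ε + 2*δ)
  · rw [Set.indicator_of_mem hy]
    show SGchi ε δ x y ≤ (1:ℝ)
    exact SGchi_le_one
  · rw [Set.indicator_of_notMem hy]
    show SGchi ε δ x y ≤ (0:ℝ)
    rw [mem_ball, Real.dist_eq, not_lt] at hy
    rw [SGchi_eq_zero hδ (by rw [abs_sub_comm]; linarith)]
  
lemma SGrho_cont (ν : Measure ℝ) [IsFiniteMeasure ν] {ε δ : ℝ} :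
    Continuous fun x => SGrho ν ε δ x := by
  apply continuous_of_dominated (bound := fun _ => (1:ℝ))
  · exact fun x => (SGchi_cont_y x).aestronglyMeasurable
  · intro x
    apply Eventually.of_forall
    intro y
    rw [Real.norm_eq_abs]
    exact abs_le.mpr ⟨by linarith [SGchi_nonneg (ε := ε) (δ := δ) (x := x) (y := y)], SGchi_le_one⟩
  · exact integrable_const 1
  · exact Eventually.of_forall (fun y => SGchi_cont_x y)

lemma SG.phi_rho_integrable (ν : Measure ℝ) [IsFiniteMeasure ν] {q c ε δ : ℝ}
    (hc : 0 < c) (hδ : 0 < δ) (hq1 : q ≤ 1) :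
    Integrable (fun x => SGphi q c (SGrho ν ε δ x)) ν :=
  SG.integrable_bdd_cont ν ((SGphi_cont hc).comp (SGrho_cont ν)) (c^(q-1))
    (fun x => by
      rw [abs_of_pos SGphi_pos]
      exact SGphi_le hc hq1 _)

lemma SG.ofReal_SGG_eq (ν : Measure ℝ) [IsFiniteMeasure ν] {q c ε δ : ℝ}
    (hc : 0 < c) (hδ : 0 < δ) (hq1 : q ≤ 1) :
    ENNReal.ofReal (SGG ν q c ε δ) = ∫⁻ x, ENNReal.ofReal (SGphi q c (SGrho ν ε δ x)) ∂ν :=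
  ofReal_integral_eq_lintegral_ofReal (SG.phi_rho_integrable ν hc hδ hq1)
    (Eventually.of_forall fun x => SGphi_pos.le)

/-- Lemma U : `G ≤ corrInt ε`. -/
lemma SG.ofReal_SGG_le (ν : Measure ℝ) [IsFiniteMeasure ν] {q c ε δ : ℝ}
    (hc : 0 < c) (hδ : 0 < δ) (hq1 : q < 1) :
    ENNReal.ofReal (SGG ν q c ε δ) ≤ corrInt ν q ε := by
  rw [SG.ofReal_SGG_eq ν hc hδ hq1.le]
  apply lintegral_mono
  intro x
  show ENNReal.ofReal (SGphi q c (SGrho ν ε δ x)) ≤ ν (ball x ε) ^ (q-1)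
  rcases eq_or_ne (ν (ball x ε)) 0 with h0 | h0
  · rw [h0, show q - 1 = -(1 - q) by ring, ENNReal.rpow_neg,
      ENNReal.zero_rpow_of_pos (by linarith), ENNReal.inv_zero]
    exact le_top
  · have hb : 0 < (ν (ball x ε)).toReal := ENNReal.toReal_pos h0 (measure_ne_top _ _)
    have h1 : (ν (ball x ε)).toReal ≤ SGrho ν ε δ x := SGrho_ge ν hδ x
    have h2 : SGphi q c (SGrho ν ε δ x) ≤ (ν (ball x ε)).toReal ^ (q-1) := by
      rw [SGphi_eq_rpow hc]
      exact Real.rpow_le_rpow_of_nonpos hb (le_trans h1 (le_max_left _ _)) (by linarith)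
    calc ENNReal.ofReal (SGphi q c (SGrho ν ε δ x))
        ≤ ENNReal.ofReal ((ν (ball x ε)).toReal ^ (q-1)) := ENNReal.ofReal_le_ofReal h2
      _ = ENNReal.ofReal ((ν (ball x ε)).toReal) ^ (q-1) := (ENNReal.ofReal_rpow_of_pos hb).symm
      _ = ν (ball x ε) ^ (q-1) := by rw [ENNReal.ofReal_toReal (measure_ne_top _ _)]

lemma SG.iSup_min_eq (a : ℕ → ℝ≥0∞) (K : ℝ≥0∞)
    (ha : ∀ M : ℝ≥0∞, M ≠ ⊤ → ∃ n, M ≤ a n) : ⨆ n, min (a n) K = K := by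
  apply le_antisymm (iSup_le fun n => min_le_right _ _)
  rcases eq_or_ne K ⊤ with hK | hK
  · subst hK
    have hmin : ∀ n, min (a n) ⊤ = a n := fun n => min_eq_left le_top
    simp only [hmin]
    by_contra hlt
    have hS : (⨆ n, a n) ≠ ⊤ := fun h => hlt (le_of_eq h.symm)
    obtain ⟨n, hn⟩ := ha ((⨆ m, a m) + 1) (ENNReal.add_ne_top.mpr ⟨hS, ENNReal.one_ne_top⟩)
    have h2 : a n ≤ ⨆ m, a m := le_iSup a n
    have h3 : (⨆ m, a m) < (⨆ m, a m) + 1 := ENNReal.lt_add_right hS one_ne_zero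
    exact absurd (le_trans hn h2) (not_le.mpr h3)
  · obtain ⟨n, hn⟩ := ha K hK
    calc K = min (a n) K := (min_eq_right hn).symm
      _ ≤ ⨆ n, min (a n) K := le_iSup (fun n => min (a n) K) n

lemma SG.a_unbdd {q : ℝ} (hq1 : q < 1) (M : ℝ≥0∞) (hM : M ≠ ⊤) :
    ∃ n : ℕ, M ≤ ENNReal.ofReal ((((n:ℝ)+2)⁻¹) ^ (q-1)) := by
  obtain ⟨n, hn⟩ := exists_nat_ge (M.toReal ^ (1-q)⁻¹)
  refine ⟨n, ?_⟩
  have hpos : (0:ℝ) < (n:ℝ) + 2 := by positivity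
  have h2 : (((n:ℝ)+2)⁻¹) ^ (q-1) = ((n:ℝ)+2) ^ (1-q) := by
    rw [Real.inv_rpow hpos.le, ← Real.rpow_neg hpos.le]
    congr 1
    ring
  have h3 : M.toReal ≤ ((n:ℝ)+2) ^ (1-q) := by
    have hx : M.toReal ^ ((1-q)⁻¹ * (1-q)) ≤ ((n:ℝ)+2) ^ (1-q) := by
      rw [Real.rpow_mul ENNReal.toReal_nonneg]
      exact Real.rpow_le_rpow (Real.rpow_nonneg ENNReal.toReal_nonneg _)
        (by linarith) (by linarith)
    rwa [inv_mul_cancel₀ (by linarith : (1:ℝ)-q ≠ 0), Real.rpow_one] at hx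
  calc M = ENNReal.ofReal M.toReal := (ENNReal.ofReal_toReal hM).symm
    _ ≤ ENNReal.ofReal (((n:ℝ)+2) ^ (1-q)) := ENNReal.ofReal_le_ofReal h3
    _ = _ := by rw [h2]

/-- Lemma L : `corrInt (ε+2δ) ≤ ⨆ n G`. -/
lemma SG.corrInt_le_iSup (ν : Measure ℝ) [IsFiniteMeasure ν] {q ε δ : ℝ}
    (hε : 0 < ε) (hδ : 0 < δ) (hq0 : 0 < q) (hq1 : q < 1) :
    corrInt ν q (ε + 2*δ) ≤ ⨆ n : ℕ, ENNReal.ofReal (SGG ν q (((n:ℝ)+2)⁻¹) ε δ) := by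
  set h : ℝ → ℝ≥0∞ := fun x => ν (ball x (ε + 2*δ)) with hh
  have hmeas : Measurable h := SG.meas_ball_meas ν _
  set a : ℕ → ℝ≥0∞ := fun n => ENNReal.ofReal ((((n:ℝ)+2)⁻¹) ^ (q-1)) with ha
  have hcn : ∀ n : ℕ, (0:ℝ) < ((n:ℝ)+2)⁻¹ := fun n => by positivity
  have stepA : ∀ n : ℕ, ∫⁻ x, min (a n) (h x ^ (q-1)) ∂ν
      ≤ ENNReal.ofReal (SGG ν q (((n:ℝ)+2)⁻¹) ε δ) := by
    intro n
    set c := ((n:ℝ)+2)⁻¹ with hc'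
    have hc : (0:ℝ) < c := hcn n
    rw [SG.ofReal_SGG_eq ν hc hδ hq1.le]
    apply lintegral_mono
    intro x
    show min (a n) (h x ^ (q-1)) ≤ ENNReal.ofReal (SGphi q c (SGrho ν ε δ x))
    have hrle : SGrho ν ε δ x ≤ (h x).toReal := SGrho_le ν hδ x
    rcases eq_or_ne (h x) 0 with h0 | h0
    · have hrho0 : SGrho ν ε δ x = 0 := by
        refine le_antisymm ?_ (SGrho_nonneg ν)
        calc SGrho ν ε δ x ≤ (h x).toReal := hrle
          _ = 0 := by rw [h0]; simp
      have hphi : SGphi q c (SGrho ν ε δ x) = c ^ (q-1) := by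
        rw [hrho0, SGphi_eq_rpow hc, max_eq_right hc.le]
      rw [h0, show q - 1 = -(1 - q) by ring, ENNReal.rpow_neg,
        ENNReal.zero_rpow_of_pos (by linarith), ENNReal.inv_zero, min_eq_left le_top, hphi]
    · have hbR : 0 < (h x).toReal := ENNReal.toReal_pos h0 (measure_ne_top _ _)
      have hphi_ge : (max ((h x).toReal) c) ^ (q-1) ≤ SGphi q c (SGrho ν ε δ x) := by
        rw [SGphi_eq_rpow hc]
        exact Real.rpow_le_rpow_of_nonpos (lt_of_lt_of_le hc (le_max_right _ _))
          (max_le_max hrle le_rfl) (by linarith)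
      rcases le_total ((h x).toReal) c with hcmp | hcmp
      · calc min (a n) (h x ^ (q-1)) ≤ a n := min_le_left _ _
          _ = ENNReal.ofReal ((max ((h x).toReal) c) ^ (q-1)) := by rw [max_eq_right hcmp]
          _ ≤ ENNReal.ofReal (SGphi q c (SGrho ν ε δ x)) := ENNReal.ofReal_le_ofReal hphi_ge
      · calc min (a n) (h x ^ (q-1)) ≤ h x ^ (q-1) := min_le_right _ _
          _ = ENNReal.ofReal (((h x).toReal) ^ (q-1)) := by
              rw [← ENNReal.ofReal_rpow_of_pos hbR, ENNReal.ofReal_toReal (measure_ne_top _ _)]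
          _ = ENNReal.ofReal ((max ((h x).toReal) c) ^ (q-1)) := by rw [max_eq_left hcmp]
          _ ≤ ENNReal.ofReal (SGphi q c (SGrho ν ε δ x)) := ENNReal.ofReal_le_ofReal hphi_ge
  have hamono : Monotone a := by
    intro n m hnm
    apply ENNReal.ofReal_le_ofReal
    apply Real.rpow_le_rpow_of_nonpos (hcn m) ?_ (by linarith)
    apply inv_anti₀ (by positivity)
    have : (n:ℝ) ≤ (m:ℝ) := by exact_mod_cast hnm
    linarith
  have hmono : Monotone fun n : ℕ => fun x => min (a n) (h x ^ (q-1)) :=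
    fun n m hnm x => min_le_min (hamono hnm) le_rfl
  have hmeasn : ∀ n, Measurable fun x => min (a n) (h x ^ (q-1)) := fun n =>
    measurable_const.min (ENNReal.continuous_rpow_const.measurable.comp hmeas)
  have hsup : ∀ x, ⨆ n, min (a n) (h x ^ (q-1)) = h x ^ (q-1) := fun x =>
    SG.iSup_min_eq a _ (SG.a_unbdd hq1)
  calc corrInt ν q (ε + 2*δ) = ∫⁻ x, h x ^ (q-1) ∂ν := rfl
    _ = ∫⁻ x, ⨆ n, min (a n) (h x ^ (q-1)) ∂ν := by
        refine lintegral_congr fun x => (hsup x).symm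
    _ = ⨆ n, ∫⁻ x, min (a n) (h x ^ (q-1)) ∂ν := lintegral_iSup hmeasn hmono
    _ ≤ ⨆ n : ℕ, ENNReal.ofReal (SGG ν q (((n:ℝ)+2)⁻¹) ε δ) := iSup_mono stepA


lemma SG.dupper_iff (ν : Measure ℝ) [IsFiniteMeasure ν] {R q γ : ℝ}
    (hsupp : ν ((Icc (-R) R)ᶜ) = 0) (hν : ν univ ≠ 0)
    (hq0 : 0 < q) (hq1 : q < 1) (hγ : 0 ≤ γ) :
    γ ≤ Dupper ν q ↔ ∀ k : ℕ, ∃ᶠ ε in 𝓝[>] (0:ℝ),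
      Real.exp ((γ - ((k:ℝ)+1)⁻¹) * ((q-1) * Real.log ε)) < (corrInt ν q ε).toReal := by
  set g : ℝ → ℝ := fun ε => Real.log (corrInt ν q ε).toReal / ((q - 1) * Real.log ε) with hg
  have hνfin : ν univ ≠ ⊤ := measure_ne_top ν _
  have hmpos : 0 < ν univ ^ q := ENNReal.rpow_pos (pos_iff_ne_zero.mpr hν) hνfin
  have hmne : ν univ ^ q ≠ ⊤ := ENNReal.rpow_ne_top_of_nonneg hq0.le hνfin
  set mR : ℝ := (ν univ ^ q).toReal with hmR
  have hmRpos : 0 < mR := ENNReal.toReal_pos hmpos.ne' hmne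
  have hcne : ∀ ε : ℝ, 0 < ε → corrInt ν q ε ≠ ⊤ := fun ε hε =>
    SG.corrInt_ne_top ν hε hsupp hq0 hq1
  have htlb : ∀ ε : ℝ, 0 < ε → mR ≤ (corrInt ν q ε).toReal := fun ε hε =>
    ENNReal.toReal_mono (hcne ε hε) (SG.le_corrInt ν ε hq0 hq1)
  have htpos : ∀ ε : ℝ, 0 < ε → 0 < (corrInt ν q ε).toReal := fun ε hε =>
    lt_of_lt_of_le hmRpos (htlb ε hε)
  have hR0 : 0 ≤ R := by
    by_contra hRneg
    push_neg at hRneg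
    have hemp : Icc (-R) R = (∅ : Set ℝ) := Icc_eq_empty (by intro hcon; linarith)
    rw [hemp, compl_empty] at hsupp
    exact hν (by simpa using hsupp)
  set Cst : ℝ := (2*R + 4) * (max 1 (ν univ)).toReal with hCst
  have hmax1 : (1:ℝ) ≤ (max 1 (ν univ)).toReal := by
    have h1 : (1:ℝ≥0∞) ≤ max 1 (ν univ) := le_max_left _ _
    have h2 : (max 1 (ν univ)) ≠ ⊤ := (max_lt ENNReal.one_lt_top (measure_lt_top ν _)).ne
    calc (1:ℝ) = (1:ℝ≥0∞).toReal := by simp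
      _ ≤ _ := ENNReal.toReal_mono h2 h1
  have hCst1 : 1 ≤ Cst := by nlinarith
  have hup : ∀ ε : ℝ, ε ∈ Ioo (0:ℝ) 1 → (corrInt ν q ε).toReal ≤ Cst / ε := by
    intro ε hε
    have hle := SG.corrInt_le ν hε.1 hsupp hq0 hq1
    have hBne : ((2 : ℝ≥0∞) * ((⌈R / ε⌉₊ : ℕ) : ℝ≥0∞) + 2) * max 1 (ν univ) ≠ ⊤ := by
      apply ENNReal.mul_ne_top
      · exact ENNReal.add_ne_top.mpr
          ⟨ENNReal.mul_ne_top (by simp) (ENNReal.natCast_ne_top _), by simp⟩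
      · exact (max_lt ENNReal.one_lt_top (measure_lt_top ν _)).ne
    have h1 : (corrInt ν q ε).toReal
        ≤ (((2 : ℝ≥0∞) * ((⌈R / ε⌉₊ : ℕ) : ℝ≥0∞) + 2) * max 1 (ν univ)).toReal :=
      ENNReal.toReal_mono hBne hle
    have h2 : (((2 : ℝ≥0∞) * ((⌈R / ε⌉₊ : ℕ) : ℝ≥0∞) + 2) * max 1 (ν univ)).toReal
        = (2 * ((⌈R / ε⌉₊ : ℕ) : ℝ) + 2) * (max 1 (ν univ)).toReal := by
      rw [ENNReal.toReal_mul, ENNReal.toReal_add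
        (ENNReal.mul_ne_top (by simp) (ENNReal.natCast_ne_top _)) (by simp),
        ENNReal.toReal_mul]
      norm_num
    have hceil : ((⌈R / ε⌉₊ : ℕ) : ℝ) < R / ε + 1 := Nat.ceil_lt_add_one (div_nonneg hR0 hε.1.le)
    have hRe : (R/ε)*ε = R := div_mul_cancel₀ R hε.1.ne'
    have h3 : (2 * ((⌈R / ε⌉₊ : ℕ) : ℝ) + 2) * ε ≤ 2*R + 4 := by
      nlinarith [hε.1, hε.2, hceil, hRe, (show (0:ℝ) ≤ ((⌈R / ε⌉₊ : ℕ) : ℝ) from Nat.cast_nonneg _)]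
    have h4 : 2 * ((⌈R / ε⌉₊ : ℕ) : ℝ) + 2 ≤ (2*R + 4) / ε := (le_div_iff₀ hε.1).mpr h3
    have h5 : (2 * ((⌈R / ε⌉₊ : ℕ) : ℝ) + 2) * (max 1 (ν univ)).toReal
        ≤ ((2*R + 4) / ε) * (max 1 (ν univ)).toReal :=
      mul_le_mul_of_nonneg_right h4 (by linarith)
    have h6 : ((2*R + 4) / ε) * (max 1 (ν univ)).toReal = Cst / ε := by
      rw [hCst]; ring
    rw [h2] at h1
    linarith
  have hev1 : ∀ᶠ ε in 𝓝[>] (0:ℝ), ε ∈ Ioo (0:ℝ) 1 :=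
    eventually_of_mem (Ioo_mem_nhdsGT_of_mem (by norm_num : (0:ℝ) ∈ Ico (0:ℝ) 1))
      (fun _ h => h)
  set ε₁ : ℝ := min 1 (Real.exp (-(max 1 (Real.log Cst)))) with hε₁
  have hε₁pos : 0 < ε₁ := lt_min one_pos (Real.exp_pos _)
  have hev2 : ∀ᶠ ε in 𝓝[>] (0:ℝ), ε ∈ Ioo (0:ℝ) ε₁ :=
    eventually_of_mem (Ioo_mem_nhdsGT_of_mem (⟨le_refl 0, hε₁pos⟩ : (0:ℝ) ∈ Ico (0:ℝ) ε₁))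
      (fun _ h => h)
  have hLfacts : ∀ ε : ℝ, ε ∈ Ioo (0:ℝ) ε₁ →
      ε < 1 ∧ 1 ≤ -Real.log ε ∧ Real.log Cst ≤ -Real.log ε := by
    intro ε hε
    have hε1 : ε < 1 := lt_of_lt_of_le hε.2 (min_le_left _ _)
    have hloge : Real.log ε < -(max 1 (Real.log Cst)) := by
      calc Real.log ε < Real.log (Real.exp (-(max 1 (Real.log Cst)))) :=
            Real.log_lt_log hε.1 (lt_of_lt_of_le hε.2 (min_le_right _ _))
        _ = _ := Real.log_exp _
    refine ⟨hε1, ?_, ?_⟩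
    · have := le_max_left (1:ℝ) (Real.log Cst); linarith
    · have := le_max_right (1:ℝ) (Real.log Cst); linarith
  have hbound : ∀ ε : ℝ, ε ∈ Ioo (0:ℝ) ε₁ → g ε ≤ 2 / (1-q) := by
    intro ε hε
    obtain ⟨hε1, hL1, hLC⟩ := hLfacts ε hε
    set L : ℝ := -Real.log ε with hL
    have hd : (q-1) * Real.log ε = (1-q) * L := by simp only [hL]; ring
    have hdpos : 0 < (1-q) * L := by nlinarith
    have hnum : Real.log (corrInt ν q ε).toReal ≤ 2 * L := by
      have h4 : (corrInt ν q ε).toReal ≤ Cst / ε := hup ε ⟨hε.1, hε1⟩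
      have h5 : Real.log (corrInt ν q ε).toReal ≤ Real.log (Cst / ε) :=
        Real.log_le_log (htpos ε hε.1) h4
      rw [Real.log_div (by linarith : Cst ≠ 0) (ne_of_gt hε.1)] at h5
      simp only [hL] at *
      linarith
    show Real.log (corrInt ν q ε).toReal / ((q - 1) * Real.log ε) ≤ 2 / (1-q)
    rw [hd, div_le_div_iff₀ hdpos (by linarith : (0:ℝ) < 1 - q)]
    nlinarith [hnum]
  have hlbound : ∀ ε : ℝ, ε ∈ Ioo (0:ℝ) ε₁ → -(|Real.log mR| / (1-q)) ≤ g ε := by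
    intro ε hε
    obtain ⟨hε1, hL1, hLC⟩ := hLfacts ε hε
    set L : ℝ := -Real.log ε with hL
    have hd : (q-1) * Real.log ε = (1-q) * L := by simp only [hL]; ring
    have hdpos : 0 < (1-q) * L := by nlinarith
    have hnum : -|Real.log mR| ≤ Real.log (corrInt ν q ε).toReal := by
      have h5 : Real.log mR ≤ Real.log (corrInt ν q ε).toReal :=
        Real.log_le_log hmRpos (htlb ε hε.1)
      calc -|Real.log mR| ≤ Real.log mR := neg_abs_le _
        _ ≤ _ := h5
    show -(|Real.log mR| / (1-q)) ≤ Real.log (corrInt ν q ε).toReal / ((q - 1) * Real.log ε)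
    rw [hd, le_div_iff₀ hdpos]
    have hA : 0 ≤ |Real.log mR| := abs_nonneg _
    have heq : -(|Real.log mR| / (1-q)) * ((1-q) * L) = -|Real.log mR| * L := by
      have h1q : (1:ℝ) - q ≠ 0 := by linarith
      field_simp
    rw [heq]
    nlinarith [hnum, hA, hL1]
  have hbdd : IsBoundedUnder (· ≤ ·) (𝓝[>] (0:ℝ)) g :=
    ⟨2/(1-q), by rw [eventually_map]; exact hev2.mono hbound⟩
  have hcobdd : IsCoboundedUnder (· ≤ ·) (𝓝[>] (0:ℝ)) g :=
    IsBoundedUnder.isCoboundedUnder_le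
      ⟨-(|Real.log mR| / (1-q)), by rw [eventually_map]; exact hev2.mono hlbound⟩
  have hchar : γ ≤ Dupper ν q ↔ ∀ y < γ, ∃ᶠ ε in 𝓝[>] (0:ℝ), y < g ε :=
    Filter.le_limsup_iff hcobdd hbdd
  have hconv : ∀ c' : ℝ, ∀ ε : ℝ, ε ∈ Ioo (0:ℝ) 1 →
      (Real.exp (c' * ((q-1) * Real.log ε)) < (corrInt ν q ε).toReal ↔ c' < g ε) := by
    intro c' ε hε
    have hdpos : 0 < (q-1) * Real.log ε :=
      mul_pos_of_neg_of_neg (by linarith) (Real.log_neg hε.1 hε.2)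
    have ht := htpos ε hε.1
    show _ ↔ c' < Real.log (corrInt ν q ε).toReal / ((q - 1) * Real.log ε)
    rw [lt_div_iff₀ hdpos]
    exact (Real.lt_log_iff_exp_lt ht).symm
  rw [hchar]
  constructor
  · intro h k
    have hy : γ - ((k:ℝ)+1)⁻¹ < γ := by
      have hpos : (0:ℝ) < ((k:ℝ)+1)⁻¹ := by positivity
      linarith
    refine ((h _ hy).and_eventually hev1).mono ?_
    rintro ε ⟨h1, h2⟩
    exact (hconv _ ε h2).mpr h1
  · intro h y hy
    obtain ⟨k, hk⟩ := exists_nat_one_div_lt (show 0 < γ - y by linarith)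
    refine ((h k).and_eventually hev1).mono ?_
    rintro ε ⟨h1, h2⟩
    have h3 := (hconv _ ε h2).mp h1
    have h4 : y < γ - ((k:ℝ)+1)⁻¹ := by
      rw [one_div] at hk
      linarith
    linarith

lemma SG.tau_comp {γ q : ℝ} (hγ : 0 ≤ γ) (hq1 : q < 1) (k : ℕ) {ε ε' : ℝ}
    (hε : 0 < ε) (h1 : ε ≤ ε') (h2 : ε' ≤ 2*ε)
    (h3 : ε' ≤ Real.exp (-(γ * Real.log 2 * (((k:ℝ)+2)*((k:ℝ)+3)) + 1))) :
    Real.exp ((γ - ((k:ℝ)+1)⁻¹) * ((q-1) * Real.log ε)) ≤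
      Real.exp ((γ - ((k:ℝ)+2)⁻¹) * ((q-1) * Real.log ε')) := by
  apply Real.exp_le_exp.mpr
  have hε' : 0 < ε' := lt_of_lt_of_le hε h1
  set L : ℝ := -Real.log ε with hL
  set L' : ℝ := -Real.log ε' with hL'
  have hlog2 : (0:ℝ) ≤ Real.log 2 := Real.log_nonneg one_le_two
  have hLL' : L' ≤ L := by
    have := Real.log_le_log hε h1
    simp only [hL, hL']; linarith
  have hL'big : γ * Real.log 2 * (((k:ℝ)+2)*((k:ℝ)+3)) + 1 ≤ L' := by
    have h4 : Real.log ε' ≤ -(γ * Real.log 2 * (((k:ℝ)+2)*((k:ℝ)+3)) + 1) := by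
      calc Real.log ε' ≤ Real.log (Real.exp (-(γ * Real.log 2 * (((k:ℝ)+2)*((k:ℝ)+3)) + 1))) :=
            Real.log_le_log hε' h3
        _ = _ := Real.log_exp _
    simp only [hL']; linarith
  have hnn : 0 ≤ γ * Real.log 2 * (((k:ℝ)+2)*((k:ℝ)+3)) := by positivity
  have hL'pos : 0 < L' := by nlinarith
  have hLpos : 0 < L := lt_of_lt_of_le hL'pos hLL'
  have hlog2' : L ≤ L' + Real.log 2 := by
    have h5 : Real.log ε' ≤ Real.log (2*ε) := Real.log_le_log hε' h2
    rw [Real.log_mul (by norm_num) hε.ne'] at h5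
    rw [hL, hL']
    linarith
  set a : ℝ := ((k:ℝ)+1)⁻¹ with ha'
  set b : ℝ := ((k:ℝ)+2)⁻¹ with hb'
  have ha0 : 0 < a := by rw [ha']; positivity
  have hb0 : 0 < b := by rw [hb']; positivity
  have hab : b ≤ a := by
    rw [ha', hb']
    apply inv_anti₀ (by positivity) (by linarith)
  have key : (γ - a) * L ≤ (γ - b) * L' := by
    rcases le_or_gt (γ - b) 0 with hcb | hcb
    · have s1 : (γ - b) * L ≤ (γ - b) * L' := by nlinarith
      have s2 : (γ - a) * L ≤ (γ - b) * L := by nlinarith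
      linarith
    · have hD : (0:ℝ) < ((k:ℝ)+1)*((k:ℝ)+2) := by positivity
      have hbigL : γ * Real.log 2 * (((k:ℝ)+2)*((k:ℝ)+3)) + 1 ≤ L := le_trans hL'big hLL'
      have hXL : (γ - b) * Real.log 2 * (((k:ℝ)+1)*((k:ℝ)+2)) ≤ L := by
        nlinarith [hbigL, mul_nonneg (mul_nonneg hγ hlog2)
            (show (0:ℝ) ≤ 2*((k:ℝ)+2) by positivity),
          mul_nonneg (mul_nonneg hb0.le hlog2) hD.le]
      have hstep : (γ - b) * Real.log 2 ≤ (a - b) * L := by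
        have e1 : (γ - b) * Real.log 2
            = (γ - b) * Real.log 2 * (((k:ℝ)+1)*((k:ℝ)+2)) / (((k:ℝ)+1)*((k:ℝ)+2)) := by
          field_simp
        have e2 : (γ - b) * Real.log 2 * (((k:ℝ)+1)*((k:ℝ)+2)) / (((k:ℝ)+1)*((k:ℝ)+2))
            ≤ L / (((k:ℝ)+1)*((k:ℝ)+2)) := (div_le_div_iff_of_pos_right hD).mpr hXL
        have e3 : L / (((k:ℝ)+1)*((k:ℝ)+2)) = (a - b) * L := by
          rw [ha', hb']
          field_simp
          ring
        rw [e1]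
        rw [← e3]
        exact e2
      nlinarith [hstep, mul_nonneg hcb.le (show 0 ≤ L' + Real.log 2 - L by linarith)]
  have hfin : (1-q) * ((γ - a) * L) ≤ (1-q) * ((γ - b) * L') :=
    mul_le_mul_of_nonneg_left key (by linarith)
  have hrw1 : (γ - a) * ((q-1) * Real.log ε) = (1-q) * ((γ - a) * L) := by
    simp only [hL]; ring
  have hrw2 : (γ - b) * ((q-1) * Real.log ε') = (1-q) * ((γ - b) * L') := by
    simp only [hL']; ring
  rw [hrw1, hrw2]; exact hfin


section Hilbert

variable {H : Type*} [NormedAddCommGroup H] [InnerProductSpace ℂ H] [CompleteSpace H]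

lemma SG.quad_diff (A : H →L[ℂ] H) (hA : ‖A‖ ≤ 1) (ξ η : H) :
    |(⟪ξ, A ξ⟫_ℂ : ℂ).re - (⟪η, A η⟫_ℂ : ℂ).re| ≤ (‖ξ‖ + ‖η‖) * ‖ξ - η‖ := by
  have hsplit : (⟪ξ, A ξ⟫_ℂ : ℂ) - ⟪η, A η⟫_ℂ = ⟪ξ - η, A ξ⟫_ℂ + ⟪η, A (ξ - η)⟫_ℂ := by
    rw [inner_sub_left, map_sub, inner_sub_right]
    ring
  have h1 : |(⟪ξ, A ξ⟫_ℂ : ℂ).re - (⟪η, A η⟫_ℂ : ℂ).re|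
      = |((⟪ξ, A ξ⟫_ℂ : ℂ) - ⟪η, A η⟫_ℂ).re| := by rw [Complex.sub_re]
  have hAξ : ‖A ξ‖ ≤ ‖ξ‖ := by
    calc ‖A ξ‖ ≤ ‖A‖ * ‖ξ‖ := A.le_opNorm ξ
      _ ≤ 1 * ‖ξ‖ := mul_le_mul_of_nonneg_right hA (norm_nonneg _)
      _ = ‖ξ‖ := one_mul _
  have hAξη : ‖A (ξ - η)‖ ≤ ‖ξ - η‖ := by
    calc ‖A (ξ - η)‖ ≤ ‖A‖ * ‖ξ - η‖ := A.le_opNorm _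
      _ ≤ 1 * ‖ξ - η‖ := mul_le_mul_of_nonneg_right hA (norm_nonneg _)
      _ = ‖ξ - η‖ := one_mul _
  rw [h1, hsplit]
  calc |((⟪ξ - η, A ξ⟫_ℂ + ⟪η, A (ξ - η)⟫_ℂ : ℂ)).re|
      ≤ ‖(⟪ξ - η, A ξ⟫_ℂ + ⟪η, A (ξ - η)⟫_ℂ : ℂ)‖ := Complex.abs_re_le_norm _
    _ ≤ ‖(⟪ξ - η, A ξ⟫_ℂ : ℂ)‖ + ‖(⟪η, A (ξ - η)⟫_ℂ : ℂ)‖ := norm_add_le _ _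
    _ ≤ ‖ξ - η‖ * ‖A ξ‖ + ‖η‖ * ‖A (ξ - η)‖ :=
        add_le_add (norm_inner_le_norm _ _) (norm_inner_le_norm _ _)
    _ ≤ ‖ξ - η‖ * ‖ξ‖ + ‖η‖ * ‖ξ - η‖ :=
        add_le_add (mul_le_mul_of_nonneg_left hAξ (norm_nonneg _))
          (mul_le_mul_of_nonneg_left hAξη (norm_nonneg _))
    _ = (‖ξ‖ + ‖η‖) * ‖ξ - η‖ := by ring

lemma SG.mass (T : H →L[ℂ] H) (hT : IsSelfAdjoint T) (μ : H → Measure ℝ)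
    (hfin : ∀ ξ : H, IsFiniteMeasure (μ ξ))
    (hspec : ∀ ξ : H, ∀ f : ℝ → ℝ, Continuous f →
      ∫ x, f x ∂(μ ξ) = (⟪ξ, (cfc f T) ξ⟫_ℂ : ℂ).re) (ξ : H) :
    ((μ ξ) univ).toReal = ‖ξ‖^2 := by
  haveI := hfin ξ
  have h1 := hspec ξ (fun _ => (1:ℝ)) continuous_const
  rw [integral_const, smul_eq_mul, mul_one] at h1
  rw [← measureReal_def, h1, cfc_const (1:ℝ) T hT, map_one, ContinuousLinearMap.one_apply]
  have h2 := inner_self_eq_norm_sq (𝕜 := ℂ) ξ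
  simpa using h2

lemma SG.SGG_cont (T : H →L[ℂ] H) (hT : IsSelfAdjoint T) (μ : H → Measure ℝ)
    (hfin : ∀ ξ : H, IsFiniteMeasure (μ ξ))
    (hspec : ∀ ξ : H, ∀ f : ℝ → ℝ, Continuous f →
      ∫ x, f x ∂(μ ξ) = (⟪ξ, (cfc f T) ξ⟫_ℂ : ℂ).re)
    {q c ε δ : ℝ} (hq1 : q < 1) (hc : 0 < c) (hδ : 0 < δ) :
    Continuous fun ξ : H => SGG (μ ξ) q c ε δ := by
  haveI := hfin
  have hAx : ∀ x : ℝ, ‖cfc (fun y => SGchi ε δ x y) T‖ ≤ 1 := by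
    intro x
    apply norm_cfc_le zero_le_one
    intro y _
    rw [Real.norm_eq_abs]
    exact abs_le.mpr ⟨by
      linarith [SGchi_nonneg (ε := ε) (δ := δ) (x := x) (y := y)], SGchi_le_one⟩
  have hrho_repr : ∀ (ξ : H) (x : ℝ),
      SGrho (μ ξ) ε δ x = (⟪ξ, cfc (fun y => SGchi ε δ x y) T ξ⟫_ℂ : ℂ).re := fun ξ x =>
    hspec ξ _ (SGchi_cont_y x)
  have hrho_diff : ∀ (ξ η : H) (x : ℝ),
      |SGrho (μ ξ) ε δ x - SGrho (μ η) ε δ x| ≤ (‖ξ‖ + ‖η‖) * ‖ξ - η‖ := by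
    intro ξ η x
    rw [hrho_repr ξ x, hrho_repr η x]
    exact SG.quad_diff _ (hAx x) ξ η
  set K : ℝ := (1 - q) * c ^ (q-1) / c with hK'
  have hK0 : 0 ≤ K :=
    div_nonneg (mul_nonneg (by linarith) (Real.rpow_nonneg hc.le _)) hc.le
  rw [continuous_iff_continuousAt]
  intro ξ₀
  set F₀ : ℝ → ℝ := fun x => SGphi q c (SGrho (μ ξ₀) ε δ x) with hF₀'
  have hF₀cont : Continuous F₀ := (SGphi_cont hc).comp (SGrho_cont (μ ξ₀))
  set Hf : H → ℝ := fun ξ => (⟪ξ, cfc F₀ T ξ⟫_ℂ : ℂ).re with hHf'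
  have hHcont : Continuous Hf := by
    apply Complex.continuous_re.comp
    exact Continuous.inner continuous_id (cfc F₀ T).continuous
  have hHeq : ∀ ξ : H, Hf ξ = ∫ x, F₀ x ∂(μ ξ) := fun ξ => (hspec ξ F₀ hF₀cont).symm
  have hdiff : ∀ ξ : H, |SGG (μ ξ) q c ε δ - Hf ξ| ≤ K * ((‖ξ‖ + ‖ξ₀‖) * ‖ξ - ξ₀‖) * ‖ξ‖^2 := by
    intro ξ
    rw [hHeq ξ]
    have hint1 : Integrable (fun x => SGphi q c (SGrho (μ ξ) ε δ x)) (μ ξ) :=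
      SG.phi_rho_integrable (μ ξ) hc hδ hq1.le
    have hint2 : Integrable F₀ (μ ξ) :=
      SG.integrable_bdd_cont (μ ξ) hF₀cont (c^(q-1))
        (fun x => by rw [abs_of_pos SGphi_pos]; exact SGphi_le hc hq1.le _)
    have heq2 : SGG (μ ξ) q c ε δ - ∫ x, F₀ x ∂(μ ξ)
        = ∫ x, (SGphi q c (SGrho (μ ξ) ε δ x) - F₀ x) ∂(μ ξ) := by
      rw [integral_sub hint1 hint2]
      rfl
    rw [heq2]
    have hb : ∀ x, ‖SGphi q c (SGrho (μ ξ) ε δ x) - F₀ x‖ ≤ K * ((‖ξ‖ + ‖ξ₀‖) * ‖ξ - ξ₀‖) := by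
      intro x
      rw [Real.norm_eq_abs]
      calc |SGphi q c (SGrho (μ ξ) ε δ x) - SGphi q c (SGrho (μ ξ₀) ε δ x)|
          ≤ K * |SGrho (μ ξ) ε δ x - SGrho (μ ξ₀) ε δ x| := SGphi_lip hc hq1 _ _
        _ ≤ K * ((‖ξ‖ + ‖ξ₀‖) * ‖ξ - ξ₀‖) :=
            mul_le_mul_of_nonneg_left (hrho_diff ξ ξ₀ x) hK0
    have hnorm := norm_integral_le_of_norm_le_const (μ := μ ξ) (Eventually.of_forall hb)
    rw [Real.norm_eq_abs] at hnorm
    calc |∫ x, (SGphi q c (SGrho (μ ξ) ε δ x) - F₀ x) ∂(μ ξ)|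
        ≤ K * ((‖ξ‖ + ‖ξ₀‖) * ‖ξ - ξ₀‖) * ((μ ξ) univ).toReal := hnorm
      _ = K * ((‖ξ‖ + ‖ξ₀‖) * ‖ξ - ξ₀‖) * ‖ξ‖^2 := by
          rw [SG.mass T hT μ hfin hspec ξ]
  have hcont2 : Continuous fun ξ : H => K * ((‖ξ‖ + ‖ξ₀‖) * ‖ξ - ξ₀‖) * ‖ξ‖^2 :=
    (continuous_const.mul ((continuous_norm.add continuous_const).mul
      ((continuous_id.sub continuous_const).norm))).mul (continuous_norm.pow 2)
  have htends := hcont2.tendsto ξ₀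
  simp only [sub_self, norm_zero, mul_zero, zero_mul] at htends
  have htend0 : Tendsto (fun ξ : H => SGG (μ ξ) q c ε δ - Hf ξ) (𝓝 ξ₀) (𝓝 0) :=
    squeeze_zero_norm (fun ξ => by rw [Real.norm_eq_abs]; exact hdiff ξ) htends
  have hHG : Hf ξ₀ = SGG (μ ξ₀) q c ε δ := by rw [hHeq ξ₀]; rfl
  have h2 : Tendsto (fun ξ : H => (SGG (μ ξ) q c ε δ - Hf ξ) + Hf ξ) (𝓝 ξ₀)
      (𝓝 (0 + Hf ξ₀)) := htend0.add (hHcont.tendsto ξ₀)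
  have h3 : (fun ξ : H => (SGG (μ ξ) q c ε δ - Hf ξ) + Hf ξ)
      = fun ξ => SGG (μ ξ) q c ε δ := by
    funext ξ; ring
  rw [h3] at h2
  rw [zero_add, hHG] at h2
  exact h2

end Hilbert


end SGAux

open Metric Set

theorem stmt_10 {H : Type*} [NormedAddCommGroup H] [InnerProductSpace ℂ H] [CompleteSpace H]
    (T : H →L[ℂ] H) (hT : IsSelfAdjoint T) (μ : H → Measure ℝ)
    (hfin : ∀ ξ : H, IsFiniteMeasure (μ ξ))
    (hsupp : ∀ ξ : H, μ ξ ((Set.Icc (-‖T‖) ‖T‖)ᶜ) = 0)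
    (hspec : ∀ ξ : H, ∀ f : ℝ → ℝ, Continuous f →
      ∫ x, f x ∂(μ ξ) = (⟪ξ, (cfc f T) ξ⟫_ℂ : ℂ).re)
    (q γ : ℝ) (hq : q ∈ Set.Ioo (0 : ℝ) 1) (hγ : 0 ≤ γ) :
    IsGδ {ξ : H | ξ ≠ 0 ∧ γ ≤ Dupper (μ ξ) q} := by
  haveI := hfin
  obtain ⟨hq0, hq1⟩ := hq
  have hν : ∀ ξ : H, ξ ≠ 0 → (μ ξ) univ ≠ 0 := by
    intro ξ hξ h0
    have hm := SG.mass T hT μ hfin hspec ξ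
    rw [h0] at hm
    simp only [ENNReal.toReal_zero] at hm
    exact hξ (norm_eq_zero.mp (sq_eq_zero_iff.mp hm.symm))
  set W : ℕ → ℕ → Set H := fun k m => {ξ : H | ξ ≠ 0 ∧ ∃ ε δ : ℝ, ∃ n : ℕ,
      0 < ε ∧ 0 < δ ∧ δ ≤ ε/2 ∧ ε + 2*δ < min 1 (((m:ℝ)+1)⁻¹) ∧
      Real.exp ((γ - ((k:ℝ)+1)⁻¹) * ((q-1) * Real.log (ε + 2*δ)))
        < SGG (μ ξ) q (((n:ℝ)+2)⁻¹) ε δ} with hW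
  have hWopen : ∀ k m, IsOpen (W k m) := by
    intro k m
    have hWeq : W k m = {ξ : H | ξ ≠ 0} ∩ ⋃ (ε : ℝ) (δ : ℝ) (n : ℕ)
        (_ : 0 < ε) (_ : 0 < δ) (_ : δ ≤ ε/2) (_ : ε + 2*δ < min 1 (((m:ℝ)+1)⁻¹)),
        {ξ : H | Real.exp ((γ - ((k:ℝ)+1)⁻¹) * ((q-1) * Real.log (ε + 2*δ)))
          < SGG (μ ξ) q (((n:ℝ)+2)⁻¹) ε δ} := by
      ext ξ
      simp only [hW, mem_setOf_eq, mem_inter_iff, mem_iUnion, exists_prop]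
    rw [hWeq]
    refine IsOpen.inter isOpen_ne ?_
    refine isOpen_iUnion fun ε => isOpen_iUnion fun δ => isOpen_iUnion fun n =>
      isOpen_iUnion fun h1 => isOpen_iUnion fun h2 => isOpen_iUnion fun _ =>
      isOpen_iUnion fun _ => ?_
    exact isOpen_lt continuous_const
      (SG.SGG_cont T hT μ hfin hspec hq1 (by positivity) h2)
  have key : {ξ : H | ξ ≠ 0 ∧ γ ≤ Dupper (μ ξ) q} = ⋂ (k : ℕ) (m : ℕ), W k m := by
    ext ξ
    simp only [mem_setOf_eq, mem_iInter]
    constructor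
    · rintro ⟨hξ, hD⟩ k m
      refine ⟨hξ, ?_⟩
      have hfreq := (SG.dupper_iff (μ ξ) (hsupp ξ) (hν ξ hξ) hq0 hq1 hγ).mp hD k
      have hminpos : (0:ℝ) < min 1 (((m:ℝ)+1)⁻¹) := lt_min one_pos (by positivity)
      have hev : ∀ᶠ ε' in 𝓝[>] (0:ℝ), ε' ∈ Ioo (0:ℝ) (min 1 (((m:ℝ)+1)⁻¹)) :=
        eventually_of_mem (Ioo_mem_nhdsGT_of_mem ⟨le_refl 0, hminpos⟩) (fun _ h => h)
      obtain ⟨ε', h1, h2⟩ := (hfreq.and_eventually hev).exists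
      have hε'pos : 0 < ε' := h2.1
      have hcorr_ne : corrInt (μ ξ) q ε' ≠ ⊤ :=
        SG.corrInt_ne_top (μ ξ) hε'pos (hsupp ξ) hq0 hq1
      have hL := SG.corrInt_le_iSup (μ ξ) (show 0 < ε'/2 by linarith)
        (show 0 < ε'/4 by linarith) hq0 hq1
      have heqε : ε'/2 + 2*(ε'/4) = ε' := by ring
      rw [heqε] at hL
      have hoflt : ENNReal.ofReal
          (Real.exp ((γ - ((k:ℝ)+1)⁻¹) * ((q-1) * Real.log ε'))) < corrInt (μ ξ) q ε' :=
        (ENNReal.ofReal_lt_iff_lt_toReal (Real.exp_pos _).le hcorr_ne).mpr h1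
      have hlt2 := lt_of_lt_of_le hoflt hL
      rw [lt_iSup_iff] at hlt2
      obtain ⟨n, hn⟩ := hlt2
      refine ⟨ε'/2, ε'/4, n, by linarith, by linarith, by linarith, ?_, ?_⟩
      · rw [heqε]; exact h2.2
      · rw [heqε]
        exact (ENNReal.ofReal_lt_ofReal_iff_of_nonneg (Real.exp_pos _).le).mp hn
    · intro hW'
      have hξ : ξ ≠ 0 := (hW' 0 0).1
      refine ⟨hξ, ?_⟩
      rw [SG.dupper_iff (μ ξ) (hsupp ξ) (hν ξ hξ) hq0 hq1 hγ]
      intro k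
      rw [(nhdsGT_basis (0:ℝ)).frequently_iff]
      intro r hr
      set ε₀ : ℝ := Real.exp (-(γ * Real.log 2 * (((k:ℝ)+2)*((k:ℝ)+3)) + 1)) with hε₀'
      have hε₀pos : 0 < ε₀ := Real.exp_pos _
      obtain ⟨m, hm⟩ := exists_nat_one_div_lt (show 0 < min r ε₀ from lt_min hr hε₀pos)
      obtain ⟨_, εx, δx, n, hεx, hδx, hhalf, hlt, hG⟩ := hW' (k+1) m
      have hcast : (((k+1:ℕ)):ℝ) + 1 = (k:ℝ) + 2 := by push_cast; ring
      rw [hcast] at hG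
      set ε' : ℝ := εx + 2*δx with hε''
      have hε'pos : 0 < ε' := by rw [hε'']; linarith
      have hε'le : ε' < min r ε₀ := by
        have h6 : ε' < (((m:ℝ))+1)⁻¹ := lt_of_lt_of_le hlt (min_le_right _ _)
        have h7 : (((m:ℝ))+1)⁻¹ = 1/((m:ℝ)+1) := by rw [one_div]
        linarith [hm, h6, h7.le, h7.ge]
      have hcne' : corrInt (μ ξ) q εx ≠ ⊤ :=
        SG.corrInt_ne_top (μ ξ) hεx (hsupp ξ) hq0 hq1
      have hU := SG.ofReal_SGG_le (μ ξ) (show (0:ℝ) < ((n:ℝ)+2)⁻¹ by positivity) hδx hq1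
        (ε := εx)
      have hGle : SGG (μ ξ) q (((n:ℝ)+2)⁻¹) εx δx ≤ (corrInt (μ ξ) q εx).toReal :=
        (ENNReal.ofReal_le_iff_le_toReal hcne').mp hU
      have hτcomp : Real.exp ((γ - ((k:ℝ)+1)⁻¹) * ((q-1) * Real.log εx)) ≤
          Real.exp ((γ - ((k:ℝ)+2)⁻¹) * ((q-1) * Real.log ε')) := by
        apply SG.tau_comp hγ hq1 k hεx (by rw [hε'']; linarith) (by rw [hε'']; linarith)
        exact le_of_lt (lt_of_lt_of_le hε'le (min_le_right _ _))
      refine ⟨εx, ⟨hεx, ?_⟩, ?_⟩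
      · have : εx ≤ ε' := by rw [hε'']; linarith
        exact lt_of_le_of_lt this (lt_of_lt_of_le hε'le (min_le_left _ _))
      · calc Real.exp ((γ - ((k:ℝ)+1)⁻¹) * ((q-1) * Real.log εx))
            ≤ Real.exp ((γ - ((k:ℝ)+2)⁻¹) * ((q-1) * Real.log ε')) := hτcomp
          _ < SGG (μ ξ) q (((n:ℝ)+2)⁻¹) εx δx := hG
          _ ≤ (corrInt (μ ξ) q εx).toReal := hGle
  rw [key]
  exact IsGδ.iInter fun k => IsGδ.iInter fun m => (hWopen k m).isGδ
end

section
/- Let q ∈ (0,1), let (λ_j)_{j∈ℕ} be real numbers and (c_j)_{j∈ℕ} nonnegative reals with Σ_j c_j < ∞, Σ_j c_j^q < ∞, and c_j > 0 for at least one j. Let μ := Σ_j c_j δ_{λ_j}. Then for every ε > 0, ∫ μ(B(x,ε))^{q−1} dμ(x) ≤ Σ_j c_j^q, and consequently D_μ^-(q) = D_μ^+(q) = 0. -/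
open MeasureTheory Filter Topology
open scoped ENNReal InnerProductSpace

section AuxLemmas

lemma ennreal_rpow_anti {x y : ℝ≥0∞} {z : ℝ} (hxy : x ≤ y) (hz : z ≤ 0) :
    y ^ z ≤ x ^ z := by
  have h := ENNReal.inv_le_inv.2 (ENNReal.rpow_le_rpow hxy (neg_nonneg.2 hz))
  rwa [← ENNReal.rpow_neg, ← ENNReal.rpow_neg, neg_neg] at h

lemma corrInt_sum_eq (lam : ℕ → ℝ) (c : ℕ → ℝ) (q ε : ℝ) :
    corrInt (Measure.sum fun j => ENNReal.ofReal (c j) • Measure.dirac (lam j)) q ε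
      = ∑' j, ENNReal.ofReal (c j) *
          ((Measure.sum fun j => ENNReal.ofReal (c j) • Measure.dirac (lam j))
            (Metric.ball (lam j) ε)) ^ (q - 1) := by
  unfold corrInt
  rw [MeasureTheory.lintegral_sum_measure]
  refine tsum_congr fun j => ?_
  rw [MeasureTheory.lintegral_smul_measure, MeasureTheory.lintegral_dirac, smul_eq_mul]

end AuxLemmas

theorem stmt_11 (q : ℝ) (hq : q ∈ Set.Ioo (0 : ℝ) 1) (lam : ℕ → ℝ) (c : ℕ → ℝ)
    (hc0 : ∀ j, 0 ≤ c j) (hsum : Summable c)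
    (hsumq : Summable fun j => c j ^ q) (hpos : ∃ j, 0 < c j) :
    (∀ ε : ℝ, 0 < ε →
      corrInt (Measure.sum fun j => ENNReal.ofReal (c j) • Measure.dirac (lam j)) q ε
        ≤ ENNReal.ofReal (∑' j, c j ^ q)) ∧
    Dlower (Measure.sum fun j => ENNReal.ofReal (c j) • Measure.dirac (lam j)) q = 0 ∧
    Dupper (Measure.sum fun j => ENNReal.ofReal (c j) • Measure.dirac (lam j)) q = 0 := by
  obtain ⟨hq0, hq1⟩ := hq
  obtain ⟨j0, hj0⟩ := hpos
  set μ : Measure ℝ := Measure.sum fun j => ENNReal.ofReal (c j) • Measure.dirac (lam j) with hμ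
  have hq1' : q - 1 ≤ 0 := by linarith
  -- total mass
  have hS : μ Set.univ = ENNReal.ofReal (∑' j, c j) := by
    rw [hμ, Measure.sum_apply _ MeasurableSet.univ,
      ENNReal.ofReal_tsum_of_nonneg hc0 hsum]
    refine tsum_congr fun j => ?_
    simp
  have hSpos : 0 < ∑' j, c j := lt_of_lt_of_le hj0 (Summable.le_tsum hsum j0 fun i _ => hc0 i)
  -- ball measure bounds
  have hball_le : ∀ j (ε : ℝ), μ (Metric.ball (lam j) ε) ≤ ENNReal.ofReal (∑' j, c j) := by
    intro j ε
    rw [← hS]; exact measure_mono (Set.subset_univ _)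
  have hball_ge : ∀ j (ε : ℝ), 0 < ε →
      ENNReal.ofReal (c j) ≤ μ (Metric.ball (lam j) ε) := by
    intro j ε hε
    have h1 : (ENNReal.ofReal (c j) • Measure.dirac (lam j)) (Metric.ball (lam j) ε)
        = ENNReal.ofReal (c j) := by
      rw [Measure.smul_apply, smul_eq_mul, Measure.dirac_apply]
      simp [Set.indicator_of_mem (Metric.mem_ball_self hε)]
    calc ENNReal.ofReal (c j)
        = (ENNReal.ofReal (c j) • Measure.dirac (lam j)) (Metric.ball (lam j) ε) := h1.symm
      _ ≤ μ (Metric.ball (lam j) ε) := Measure.le_sum _ j _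
  -- upper bound on corrInt
  have hupper : ∀ ε : ℝ, 0 < ε → corrInt μ q ε ≤ ENNReal.ofReal (∑' j, c j ^ q) := by
    intro ε hε
    rw [corrInt_sum_eq, ← hμ,
      ENNReal.ofReal_tsum_of_nonneg (fun j => Real.rpow_nonneg (hc0 j) q) hsumq]
    refine ENNReal.tsum_le_tsum fun j => ?_
    rcases eq_or_lt_of_le (hc0 j) with h0 | h0
    · simp [← h0]
    · have h2 : (μ (Metric.ball (lam j) ε)) ^ (q - 1)
          ≤ (ENNReal.ofReal (c j)) ^ (q - 1) :=
        ennreal_rpow_anti (hball_ge j ε hε) hq1'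
      calc ENNReal.ofReal (c j) * (μ (Metric.ball (lam j) ε)) ^ (q - 1)
          ≤ ENNReal.ofReal (c j) * (ENNReal.ofReal (c j)) ^ (q - 1) :=
            mul_le_mul_right h2 _
        _ = (ENNReal.ofReal (c j)) ^ (1 : ℝ) * (ENNReal.ofReal (c j)) ^ (q - 1) := by
            rw [ENNReal.rpow_one]
        _ = (ENNReal.ofReal (c j)) ^ q := by
            rw [← ENNReal.rpow_add _ _ (by simp [h0]) ENNReal.ofReal_ne_top]
            norm_num
        _ = ENNReal.ofReal (c j ^ q) := ENNReal.ofReal_rpow_of_pos h0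
  -- lower bound on corrInt
  set A : ℝ≥0∞ := ENNReal.ofReal (c j0) * (ENNReal.ofReal (∑' j, c j)) ^ (q - 1) with hA
  have hSfin : (ENNReal.ofReal (∑' j, c j)) ≠ ⊤ := ENNReal.ofReal_ne_top
  have hSne : (ENNReal.ofReal (∑' j, c j)) ≠ 0 := by
    simp [ENNReal.ofReal_eq_zero, not_le, hSpos]
  have hApos : 0 < A := by
    apply ENNReal.mul_pos
    · simp [ENNReal.ofReal_eq_zero, not_le, hj0]
    · exact (ENNReal.rpow_pos (pos_iff_ne_zero.2 hSne) hSfin).ne'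
  have hAfin : A ≠ ⊤ := by
    apply ENNReal.mul_ne_top ENNReal.ofReal_ne_top
    rw [show q - 1 = -(1 - q) by ring, ENNReal.rpow_neg]
    exact ENNReal.inv_ne_top.2 (ENNReal.rpow_pos (pos_iff_ne_zero.2 hSne) hSfin).ne'
  have hlower : ∀ ε : ℝ, 0 < ε → A ≤ corrInt μ q ε := by
    intro ε hε
    rw [corrInt_sum_eq, ← hμ]
    refine le_trans ?_ (ENNReal.le_tsum j0)
    exact mul_le_mul_right (ennreal_rpow_anti (hball_le j0 ε) hq1') _
  -- the quotient tends to 0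
  set a : ℝ := A.toReal with ha
  set b : ℝ := (ENNReal.ofReal (∑' j, c j ^ q)).toReal with hb
  have hapos : 0 < a := ENNReal.toReal_pos hApos.ne' hAfin
  have hbound : ∀ ε : ℝ, 0 < ε →
      a ≤ (corrInt μ q ε).toReal ∧ (corrInt μ q ε).toReal ≤ b := by
    intro ε hε
    have hfin : corrInt μ q ε ≠ ⊤ :=
      ne_top_of_le_ne_top ENNReal.ofReal_ne_top (hupper ε hε)
    exact ⟨ENNReal.toReal_le_toReal hAfin hfin |>.2 (hlower ε hε),
      ENNReal.toReal_le_toReal hfin ENNReal.ofReal_ne_top |>.2 (hupper ε hε)⟩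
  set M : ℝ := max |Real.log a| |Real.log b| with hM
  have hlogbound : ∀ ε : ℝ, 0 < ε → |Real.log ((corrInt μ q ε).toReal)| ≤ M := by
    intro ε hε
    obtain ⟨h1, h2⟩ := hbound ε hε
    have hcpos : 0 < (corrInt μ q ε).toReal := lt_of_lt_of_le hapos h1
    rw [abs_le]
    constructor
    · calc -M ≤ -|Real.log a| := neg_le_neg (le_max_left _ _)
        _ ≤ Real.log a := neg_abs_le _
        _ ≤ _ := Real.log_le_log hapos h1
    · calc Real.log ((corrInt μ q ε).toReal) ≤ Real.log b := Real.log_le_log hcpos h2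
        _ ≤ |Real.log b| := le_abs_self _
        _ ≤ M := le_max_right _ _
  have hden : Tendsto (fun ε : ℝ => (q - 1) * Real.log ε) (𝓝[>] (0:ℝ)) atTop :=
    Tendsto.const_mul_atBot_of_neg (by linarith) Real.tendsto_log_nhdsGT_zero
  have key : Tendsto
      (fun ε : ℝ => Real.log (corrInt μ q ε).toReal / ((q - 1) * Real.log ε))
      (𝓝[>] (0:ℝ)) (𝓝 0) := by
    apply squeeze_zero_norm' (a := fun ε : ℝ => M * ((q - 1) * Real.log ε)⁻¹)
    · have hIoo : Set.Ioo (0:ℝ) 1 ∈ 𝓝[>] (0:ℝ) :=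
        Ioo_mem_nhdsGT_of_mem (by simp : (0:ℝ) ∈ Set.Ico (0:ℝ) 1)
      filter_upwards [hIoo] with ε hε
      have hεpos : 0 < ε := hε.1
      have hlog : Real.log ε < 0 := Real.log_neg hεpos hε.2
      have hdpos : 0 < (q - 1) * Real.log ε := mul_pos_of_neg_of_neg (by linarith) hlog
      rw [Real.norm_eq_abs, abs_div, abs_of_pos hdpos, div_le_iff₀ hdpos]
      calc |Real.log (corrInt μ q ε).toReal| ≤ M := hlogbound ε hεpos
        _ = M * ((q - 1) * Real.log ε)⁻¹ * ((q - 1) * Real.log ε) := by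
            rw [mul_assoc, inv_mul_cancel₀ hdpos.ne', mul_one]
    · have := (hden.inv_tendsto_atTop).const_mul M
      simpa using this
  exact ⟨hupper, key.liminf_eq, key.limsup_eq⟩
end
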